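/- arXiv:2304.03448 — 6 statements merged into one kernel-verified Lean document; each statement's English description precedes it below -/
import Mathlib

section
/- Let G be a finite group, H a finite-dimensional complex Hilbert space, f : G → U(H) a function, and S a subgroup of G such that f(sg) = f(s)f(g) for all s ∈ S and g ∈ G. Then for every irreducible unitary representation φ : G → U(C^d), the operator identity ((1/|S|) Σ_{s∈S} f(s) ⊗ conj(φ(s))) · f̂(φ) = f̂(φ) holds on H ⊗ C^d. Consequently, if (1/|S|) Σ_{s∈S} f(s) ⊗ conj(φ(s)) = 0, then f̂(φ) = 0. -/
open Matrix
open scoped Kronecker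

/-- The Fourier transform of `f` at a matrix-valued function `φ`:
`f̂(φ) = (1/|G|) Σ_g f(g) ⊗ conj(φ(g))`, where `conj` is entrywise conjugation. -/
noncomputable def fourierAt {G : Type*} [Fintype G] {m : Type*} [Fintype m] {d : ℕ}
    (f : G → Matrix m m ℂ) (φ : G → Matrix (Fin d) (Fin d) ℂ) :
    Matrix (m × Fin d) (m × Fin d) ℂ :=
  (1 / (Fintype.card G : ℂ)) • ∑ g : G, f g ⊗ₖ ((φ g).map (starRingEnd ℂ))

/-- The averaged operator `(1/|S|) Σ_{s∈S} f(s) ⊗ conj(φ(s))` over a subgroup `S`. -/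
noncomputable def subgroupAvg {G : Type*} [Group G] [Fintype G] {m : Type*} [Fintype m] {d : ℕ}
    (f : G → Matrix m m ℂ) (φ : G → Matrix (Fin d) (Fin d) ℂ)
    (S : Subgroup G) [DecidablePred (· ∈ S)] :
    Matrix (m × Fin d) (m × Fin d) ℂ :=
  (1 / (Nat.card ↥S : ℂ)) • ∑ s : ↥S, f (s : G) ⊗ₖ ((φ (s : G)).map (starRingEnd ℂ))

/-- If `f(sg) = f(s)f(g)` for all `s ∈ S`, then for every irreducible unitary representation
`φ` of `G` we have `((1/|S|) Σ_{s∈S} f(s) ⊗ conj(φ(s))) · f̂(φ) = f̂(φ)`; consequently, if the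
averaged operator vanishes, so does `f̂(φ)`. -/
theorem subgroupAvg_mul_fourierAt
    {G : Type} [Group G] [Fintype G]
    {m : Type} [Fintype m] [DecidableEq m]
    (f : G → Matrix m m ℂ) (hf : ∀ g, f g ∈ Matrix.unitaryGroup m ℂ)
    (S : Subgroup G) [DecidablePred (· ∈ S)]
    (hS : ∀ s ∈ S, ∀ g : G, f (s * g) = f s * f g)
    (d : ℕ) (φ : G →* Matrix.unitaryGroup (Fin d) ℂ)
    (hirr : ∀ W : Submodule ℂ (Fin d → ℂ),
      (∀ g : G, ∀ v ∈ W, (φ g : Matrix (Fin d) (Fin d) ℂ) *ᵥ v ∈ W) → W = ⊥ ∨ W = ⊤) :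
    (subgroupAvg f (fun g => (φ g : Matrix (Fin d) (Fin d) ℂ)) S *
        fourierAt f (fun g => (φ g : Matrix (Fin d) (Fin d) ℂ))
      = fourierAt f (fun g => (φ g : Matrix (Fin d) (Fin d) ℂ))) ∧
    (subgroupAvg f (fun g => (φ g : Matrix (Fin d) (Fin d) ℂ)) S = 0 →
      fourierAt f (fun g => (φ g : Matrix (Fin d) (Fin d) ℂ)) = 0) := by
  classical
  set A : G → Matrix (m × Fin d) (m × Fin d) ℂ :=
    fun g => f g ⊗ₖ ((φ g : Matrix (Fin d) (Fin d) ℂ).map (starRingEnd ℂ)) with hA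
  have key : ∀ s : ↥S, A (s : G) * ∑ g : G, A g = ∑ g : G, A g := by
    intro s
    rw [Finset.mul_sum]
    calc ∑ g : G, A (s : G) * A g = ∑ g : G, A ((s : G) * g) := by
          refine Finset.sum_congr rfl fun g _ => ?_
          simp only [hA]
          rw [← Matrix.mul_kronecker_mul, ← hS s s.2 g, ← Matrix.map_mul]
          congr 2
          rw [_root_.map_mul φ (s : G) g]
          norm_cast
      _ = ∑ g : G, A g := Equiv.sum_comp (Equiv.mulLeft (s : G)) A
  have hmain : subgroupAvg f (fun g => (φ g : Matrix (Fin d) (Fin d) ℂ)) S *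
      fourierAt f (fun g => (φ g : Matrix (Fin d) (Fin d) ℂ))
      = fourierAt f (fun g => (φ g : Matrix (Fin d) (Fin d) ℂ)) := by
    unfold subgroupAvg fourierAt
    rw [Matrix.smul_mul, Matrix.mul_smul, Finset.sum_mul]
    have hsum : ∑ s : ↥S, A (s : G) * ∑ g : G, A g
        = (Nat.card ↥S : ℂ) • ∑ g : G, A g := by
      rw [Finset.sum_congr rfl (fun s _ => key s), Finset.sum_const, Finset.card_univ,
        ← Nat.card_eq_fintype_card, (Nat.cast_smul_eq_nsmul ℂ _ _).symm]
    simp only [hA] at hsum ⊢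
    rw [hsum, smul_smul, smul_smul]
    congr 1
    field_simp
  exact ⟨hmain, fun h => by rw [← hmain, h, Matrix.zero_mul]⟩
end

section
/- There is a unique group homomorphism σ : H(n) → U((C²)^{⊗n}) satisfying σ(J) = −1, σ(X_i) = σ_X(e_i), and σ(Z_i) = σ_Z(e_i) for all i ∈ [n], and this representation σ is irreducible: the only subspaces of (C²)^{⊗n} invariant under σ(g) for all g ∈ H(n) are {0} and (C²)^{⊗n}. -/
/-- Generators of the n-qubit Weyl–Heisenberg group: `J`, `X i`, `Z i`. -/
inductive WHGen (n : ℕ) : Type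
  | J : WHGen n
  | X : Fin n → WHGen n
  | Z : Fin n → WHGen n

namespace WHGen

variable {n : ℕ}

/-- The generator `J` as an element of the free group. -/
def j : FreeGroup (WHGen n) := FreeGroup.of WHGen.J
/-- The generator `X i` as an element of the free group. -/
def x (i : Fin n) : FreeGroup (WHGen n) := FreeGroup.of (WHGen.X i)
/-- The generator `Z i` as an element of the free group. -/
def z (i : Fin n) : FreeGroup (WHGen n) := FreeGroup.of (WHGen.Z i)

end WHGen

/-- Relations of the n-qubit Weyl–Heisenberg group: `J` is central, `J² = X_i² = Z_i² = 1`,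
`[X_i, Z_i] = J`, and `X_i`, `Z_j` commute with each other for `i ≠ j` (and similarly
`X_i` with `X_j` and `Z_i` with `Z_j`). -/
def WHRels (n : ℕ) : Set (FreeGroup (WHGen n)) :=
  {w | w = WHGen.j * WHGen.j} ∪
  {w | ∃ i : Fin n, w = WHGen.x i * WHGen.x i} ∪
  {w | ∃ i : Fin n, w = WHGen.z i * WHGen.z i} ∪
  {w | ∃ i : Fin n, w = WHGen.x i * WHGen.z i * (WHGen.x i)⁻¹ * (WHGen.z i)⁻¹ * WHGen.j⁻¹} ∪
  {w | ∃ i : Fin n, w = WHGen.j * WHGen.x i * WHGen.j⁻¹ * (WHGen.x i)⁻¹} ∪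
  {w | ∃ i : Fin n, w = WHGen.j * WHGen.z i * WHGen.j⁻¹ * (WHGen.z i)⁻¹} ∪
  {w | ∃ i j : Fin n, i ≠ j ∧ w = WHGen.x i * WHGen.x j * (WHGen.x i)⁻¹ * (WHGen.x j)⁻¹} ∪
  {w | ∃ i j : Fin n, i ≠ j ∧ w = WHGen.z i * WHGen.z j * (WHGen.z i)⁻¹ * (WHGen.z j)⁻¹} ∪
  {w | ∃ i j : Fin n, i ≠ j ∧ w = WHGen.x i * WHGen.z j * (WHGen.x i)⁻¹ * (WHGen.z j)⁻¹}

/-- The n-qubit Weyl–Heisenberg group, as a presented group. -/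
abbrev WH (n : ℕ) := PresentedGroup (WHRels n)

/-- The element `J` of the Weyl–Heisenberg group. -/
def WHJ (n : ℕ) : WH n := PresentedGroup.of WHGen.J
/-- The element `X i` of the Weyl–Heisenberg group. -/
def WHX {n : ℕ} (i : Fin n) : WH n := PresentedGroup.of (WHGen.X i)
/-- The element `Z i` of the Weyl–Heisenberg group. -/
def WHZ {n : ℕ} (i : Fin n) : WH n := PresentedGroup.of (WHGen.Z i)

/-- The normal form element `J^α X_{i_1} ⋯ X_{i_k} Z_{j_1} ⋯ Z_{j_l}` determined by
`α ∈ {0,1}` and the subsets `S = {i_1 < ⋯ < i_k}` and `T = {j_1 < ⋯ < j_l}` of `[n]`. -/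
def WHnormal {n : ℕ} (α : Bool) (S T : Finset (Fin n)) : WH n :=
  (if α then WHJ n else 1) *
    ((S.sort (· ≤ ·)).map fun i => WHX i).prod *
    ((T.sort (· ≤ ·)).map fun i => WHZ i).prod

/-- The Pauli-X operator acting on the `i`-th factor of `(ℂ²)^{⊗n}`, as a matrix indexed by
`n`-bit strings: it flips the `i`-th bit. -/
def pauliX (n : ℕ) (i : Fin n) : Matrix (Fin n → Fin 2) (Fin n → Fin 2) ℂ :=
  Matrix.of fun v w => if w = Function.update v i (v i + 1) then 1 else 0

/-- The Pauli-Z operator acting on the `i`-th factor of `(ℂ²)^{⊗n}`, as a matrix indexed by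
`n`-bit strings: diagonal with entry `(-1)^{v i}`. -/
def pauliZ (n : ℕ) (i : Fin n) : Matrix (Fin n → Fin 2) (Fin n → Fin 2) ℂ :=
  Matrix.of fun v w => if v = w then (-1 : ℂ) ^ (v i : ℕ) else 0

/-- The defining conditions for the representation `σ` of the Weyl–Heisenberg group on
`(ℂ²)^{⊗n}`: `σ(J) = −1`, `σ(X_i) = σ_X(e_i)`, `σ(Z_i) = σ_Z(e_i)`. -/
def sigmaCond (n : ℕ) (σ : WH n →* Matrix.unitaryGroup (Fin n → Fin 2) ℂ) : Prop :=
  ((σ (WHJ n) : Matrix (Fin n → Fin 2) (Fin n → Fin 2) ℂ) = -1) ∧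
  (∀ i : Fin n, (σ (WHX i) : Matrix (Fin n → Fin 2) (Fin n → Fin 2) ℂ) = pauliX n i) ∧
  (∀ i : Fin n, (σ (WHZ i) : Matrix (Fin n → Fin 2) (Fin n → Fin 2) ℂ) = pauliZ n i)


section aux
variable {n : ℕ}

/-- flip the i-th bit -/
def flipv (i : Fin n) (v : Fin n → Fin 2) : Fin n → Fin 2 := Function.update v i (v i + 1)

lemma fin2_add_one_add_one (a : Fin 2) : a + 1 + 1 = a := by fin_cases a <;> decide

lemma flipv_flipv (i : Fin n) (v : Fin n → Fin 2) : flipv i (flipv i v) = v := by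
  funext k
  by_cases h : k = i
  · subst h; simp [flipv, fin2_add_one_add_one]
  · simp [flipv, Function.update_of_ne h]

lemma flipv_apply_self (i : Fin n) (v : Fin n → Fin 2) : flipv i v i = v i + 1 := by
  simp [flipv]

lemma flipv_apply_ne (i j : Fin n) (h : j ≠ i) (v : Fin n → Fin 2) : flipv i v j = v j := by
  simp [flipv, Function.update_of_ne h]

lemma eq_flipv_iff (i : Fin n) (v w : Fin n → Fin 2) : w = flipv i v ↔ v = flipv i w := by
  constructor <;> rintro rfl <;> rw [flipv_flipv]

lemma flipv_comm (i j : Fin n) (h : i ≠ j) (v : Fin n → Fin 2) :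
    flipv i (flipv j v) = flipv j (flipv i v) := by
  funext k
  by_cases hi : k = i
  · subst hi
    rw [flipv_apply_self, flipv_apply_ne _ _ h, flipv_apply_ne _ _ h, flipv_apply_self]
  · by_cases hj : k = j
    · subst hj
      rw [flipv_apply_ne i k hi, flipv_apply_self, flipv_apply_self, flipv_apply_ne i k hi]
    · rw [flipv_apply_ne _ _ hi, flipv_apply_ne _ _ hj, flipv_apply_ne _ _ hj, flipv_apply_ne _ _ hi]

lemma pauliX_eq (i : Fin n) : pauliX n i = Matrix.of fun v w => if w = flipv i v then (1:ℂ) else 0 := rfl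

lemma neg_one_pow_fin2_succ (a : Fin 2) : ((-1 : ℂ)) ^ (((a + 1) : Fin 2) : ℕ) = -(-1) ^ (a : ℕ) := by
  have h2 : (a:ℕ) = 0 ∨ (a:ℕ) = 1 := by omega
  rcases h2 with h2 | h2 <;>
    rw [Fin.val_add, show ((1:Fin 2):ℕ) = 1 from rfl, h2] <;> norm_num

lemma pauliX_mul_pauliX (i : Fin n) : pauliX n i * pauliX n i = 1 := by
  ext v w
  simp only [Matrix.mul_apply, pauliX_eq, Matrix.of_apply, ite_mul, one_mul, zero_mul,
    Finset.sum_ite_eq', Finset.mem_univ, if_true, Matrix.one_apply]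
  rw [flipv_flipv]
  simp [eq_comm]

lemma pauliZ_eq (i : Fin n) : pauliZ n i = Matrix.diagonal (fun v => (-1:ℂ) ^ (v i : ℕ)) := by
  ext v w
  simp [pauliZ, Matrix.diagonal]

lemma pauliZ_mul_pauliZ (i : Fin n) : pauliZ n i * pauliZ n i = 1 := by
  have h : ∀ a : Fin 2, (-1:ℂ) ^ (a:ℕ) * (-1) ^ (a:ℕ) = 1 := by
    intro a
    have : (a:ℕ) = 0 ∨ (a:ℕ) = 1 := by omega
    rcases this with h | h <;> rw [h] <;> norm_num
  rw [pauliZ_eq, Matrix.diagonal_mul_diagonal]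
  simp only [h, Matrix.diagonal_one]

lemma pauliX_mul_pauliZ_self (i : Fin n) :
    pauliX n i * pauliZ n i = -(pauliZ n i * pauliX n i) := by
  rw [pauliZ_eq]
  ext v w
  simp only [Matrix.mul_diagonal, Matrix.diagonal_mul, Matrix.neg_apply, pauliX_eq, Matrix.of_apply]
  by_cases h : w = flipv i v
  · subst h
    rw [if_pos rfl, flipv_apply_self, neg_one_pow_fin2_succ]
    ring
  · rw [if_neg h]; ring

lemma pauliX_mul_pauliX_comm (i j : Fin n) (h : i ≠ j) :
    pauliX n i * pauliX n j = pauliX n j * pauliX n i := by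
  ext v w
  simp only [Matrix.mul_apply, pauliX_eq, Matrix.of_apply, ite_mul, one_mul, zero_mul,
    Finset.sum_ite_eq', Finset.mem_univ, if_true]
  rw [flipv_comm j i (Ne.symm h)]

lemma pauliZ_mul_pauliZ_comm (i j : Fin n) :
    pauliZ n i * pauliZ n j = pauliZ n j * pauliZ n i := by
  rw [pauliZ_eq, pauliZ_eq, Matrix.diagonal_mul_diagonal, Matrix.diagonal_mul_diagonal]
  simp only [mul_comm]

lemma pauliX_mul_pauliZ_comm (i j : Fin n) (h : i ≠ j) :
    pauliX n i * pauliZ n j = pauliZ n j * pauliX n i := by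
  rw [pauliZ_eq]
  ext v w
  simp only [Matrix.mul_diagonal, Matrix.diagonal_mul, pauliX_eq, Matrix.of_apply]
  by_cases hw : w = flipv i v
  · subst hw
    rw [if_pos rfl, flipv_apply_ne i j (Ne.symm h)]
    ring
  · rw [if_neg hw]; ring

lemma pauliX_star (i : Fin n) : star (pauliX n i) = pauliX n i := by
  ext v w
  simp only [Matrix.star_apply, pauliX_eq, Matrix.of_apply, eq_flipv_iff i w v]
  rw [apply_ite star, star_one, star_zero]

lemma pauliZ_star (i : Fin n) : star (pauliZ n i) = pauliZ n i := by
  ext v w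
  by_cases h : v = w
  · subst h; simp [Matrix.star_apply, pauliZ, star_pow]
  · simp [Matrix.star_apply, pauliZ, h, Ne.symm h]

lemma pauliX_mem (i : Fin n) : pauliX n i ∈ Matrix.unitaryGroup (Fin n → Fin 2) ℂ := by
  rw [Matrix.mem_unitaryGroup_iff, pauliX_star, pauliX_mul_pauliX]

lemma pauliZ_mem (i : Fin n) : pauliZ n i ∈ Matrix.unitaryGroup (Fin n → Fin 2) ℂ := by
  rw [Matrix.mem_unitaryGroup_iff, pauliZ_star, pauliZ_mul_pauliZ]

lemma negOne_mem : (-1 : Matrix (Fin n → Fin 2) (Fin n → Fin 2) ℂ) ∈ Matrix.unitaryGroup (Fin n → Fin 2) ℂ := by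
  rw [Matrix.mem_unitaryGroup_iff]
  simp

end aux

section main
variable {n : ℕ}
open scoped commutatorElement

/-- The images of the generators. -/
noncomputable def genMap (n : ℕ) : WHGen n → Matrix.unitaryGroup (Fin n → Fin 2) ℂ
  | .J => ⟨-1, negOne_mem⟩
  | .X i => ⟨pauliX n i, pauliX_mem i⟩
  | .Z i => ⟨pauliZ n i, pauliZ_mem i⟩

lemma genJ_sq : genMap n .J * genMap n .J = 1 := by
  apply Subtype.ext; show (-1 : Matrix _ _ ℂ) * (-1) = 1; simp

lemma genX_sq (i : Fin n) : genMap n (.X i) * genMap n (.X i) = 1 := by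
  apply Subtype.ext; exact pauliX_mul_pauliX i

lemma genZ_sq (i : Fin n) : genMap n (.Z i) * genMap n (.Z i) = 1 := by
  apply Subtype.ext; exact pauliZ_mul_pauliZ i

lemma genJ_inv : (genMap n .J)⁻¹ = genMap n .J := inv_eq_of_mul_eq_one_right genJ_sq
lemma genX_inv (i : Fin n) : (genMap n (.X i))⁻¹ = genMap n (.X i) :=
  inv_eq_of_mul_eq_one_right (genX_sq i)
lemma genZ_inv (i : Fin n) : (genMap n (.Z i))⁻¹ = genMap n (.Z i) :=
  inv_eq_of_mul_eq_one_right (genZ_sq i)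

lemma genJ_comm (g : Matrix.unitaryGroup (Fin n → Fin 2) ℂ) :
    genMap n .J * g = g * genMap n .J := by
  apply Subtype.ext
  show (-1 : Matrix (Fin n → Fin 2) (Fin n → Fin 2) ℂ) * (g : Matrix (Fin n → Fin 2) (Fin n → Fin 2) ℂ)
      = (g : Matrix (Fin n → Fin 2) (Fin n → Fin 2) ℂ) * (-1)
  rw [neg_one_mul, mul_neg_one]

lemma xzxz (i : Fin n) :
    pauliX n i * pauliZ n i * pauliX n i * pauliZ n i = -1 := by
  rw [pauliX_mul_pauliZ_self, neg_mul, neg_mul, mul_assoc (pauliZ n i) (pauliX n i),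
    pauliX_mul_pauliX, mul_one, pauliZ_mul_pauliZ]

lemma rels_hold : ∀ r ∈ WHRels n, FreeGroup.lift (genMap n) r = 1 := by
  intro r hr
  rcases hr with ((((((((h | h) | h) | h) | ⟨i, h⟩) | ⟨i, h⟩) | ⟨i, j, hij, h⟩) |
    ⟨i, j, hij, h⟩) | ⟨i, j, hij, h⟩)
  · rw [Set.mem_setOf_eq] at h
    subst h
    simp only [WHGen.j, map_mul, FreeGroup.lift_apply_of]
    exact genJ_sq
  · obtain ⟨i, h⟩ := h
    subst h
    simp only [WHGen.x, map_mul, FreeGroup.lift_apply_of]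
    exact genX_sq i
  · obtain ⟨i, h⟩ := h
    subst h
    simp only [WHGen.z, map_mul, FreeGroup.lift_apply_of]
    exact genZ_sq i
  · obtain ⟨i, h⟩ := h
    subst h
    simp only [WHGen.x, WHGen.z, WHGen.j, map_mul, map_inv, FreeGroup.lift_apply_of]
    rw [genX_inv, genZ_inv, genJ_inv]
    apply Subtype.ext
    show pauliX n i * pauliZ n i * pauliX n i * pauliZ n i * (-1) = 1
    rw [xzxz, neg_one_mul, neg_neg]
  · subst h
    simp only [WHGen.x, WHGen.j, map_mul, map_inv, FreeGroup.lift_apply_of]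
    rw [show genMap n WHGen.J * genMap n (WHGen.X i) * (genMap n WHGen.J)⁻¹ *
      (genMap n (WHGen.X i))⁻¹ = ⁅genMap n WHGen.J, genMap n (WHGen.X i)⁆ from rfl,
      commutatorElement_eq_one_iff_mul_comm]
    exact genJ_comm _
  · subst h
    simp only [WHGen.z, WHGen.j, map_mul, map_inv, FreeGroup.lift_apply_of]
    rw [show genMap n WHGen.J * genMap n (WHGen.Z i) * (genMap n WHGen.J)⁻¹ *
      (genMap n (WHGen.Z i))⁻¹ = ⁅genMap n WHGen.J, genMap n (WHGen.Z i)⁆ from rfl,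
      commutatorElement_eq_one_iff_mul_comm]
    exact genJ_comm _
  · subst h
    simp only [WHGen.x, map_mul, map_inv, FreeGroup.lift_apply_of]
    rw [show genMap n (WHGen.X i) * genMap n (WHGen.X j) * (genMap n (WHGen.X i))⁻¹ *
      (genMap n (WHGen.X j))⁻¹ = ⁅genMap n (WHGen.X i), genMap n (WHGen.X j)⁆ from rfl,
      commutatorElement_eq_one_iff_mul_comm]
    exact Subtype.ext (pauliX_mul_pauliX_comm i j hij)
  · subst h
    simp only [WHGen.z, map_mul, map_inv, FreeGroup.lift_apply_of]
    rw [show genMap n (WHGen.Z i) * genMap n (WHGen.Z j) * (genMap n (WHGen.Z i))⁻¹ *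
      (genMap n (WHGen.Z j))⁻¹ = ⁅genMap n (WHGen.Z i), genMap n (WHGen.Z j)⁆ from rfl,
      commutatorElement_eq_one_iff_mul_comm]
    exact Subtype.ext (pauliZ_mul_pauliZ_comm i j)
  · subst h
    simp only [WHGen.x, WHGen.z, map_mul, map_inv, FreeGroup.lift_apply_of]
    rw [show genMap n (WHGen.X i) * genMap n (WHGen.Z j) * (genMap n (WHGen.X i))⁻¹ *
      (genMap n (WHGen.Z j))⁻¹ = ⁅genMap n (WHGen.X i), genMap n (WHGen.Z j)⁆ from rfl,
      commutatorElement_eq_one_iff_mul_comm]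
    exact Subtype.ext (pauliX_mul_pauliZ_comm i j hij)

end main

section irr
variable {n : ℕ}

lemma pauliZ_mulVec (i : Fin n) (u : (Fin n → Fin 2) → ℂ) (w : Fin n → Fin 2) :
    (pauliZ n i).mulVec u w = (-1:ℂ) ^ (w i : ℕ) * u w := by
  rw [pauliZ_eq, Matrix.mulVec_diagonal]

lemma pauliX_mulVec (i : Fin n) (u : (Fin n → Fin 2) → ℂ) (w : Fin n → Fin 2) :
    (pauliX n i).mulVec u w = u (flipv i w) := by
  simp only [Matrix.mulVec, dotProduct, pauliX_eq, Matrix.of_apply, ite_mul, one_mul,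
    zero_mul, Finset.sum_ite_eq', Finset.mem_univ, if_true]

lemma fin2_sign_mul (a b : Fin 2) :
    (-1:ℂ) ^ (a:ℕ) * (-1) ^ (b:ℕ) = if a = b then 1 else -1 := by
  have ha : (a:ℕ) = 0 ∨ (a:ℕ) = 1 := by omega
  have hb : (b:ℕ) = 0 ∨ (b:ℕ) = 1 := by omega
  by_cases h : a = b
  · subst h
    rw [if_pos rfl]
    rcases ha with h1 | h1 <;> rw [h1] <;> norm_num
  · rw [if_neg h]
    have h' : (a:ℕ) ≠ (b:ℕ) := fun hc => h (Fin.ext hc)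
    rcases ha with h1 | h1 <;> rcases hb with h2 | h2 <;> rw [h1, h2] <;>
      first | (exfalso; omega) | norm_num

lemma fin2_ne (a b : Fin 2) (h : a ≠ b) : a = b + 1 := by revert h; revert a b; decide

lemma single_flip (i : Fin n) (a : Fin n → Fin 2) (c : ℂ) :
    (pauliX n i).mulVec (Pi.single a c) = Pi.single (flipv i a) c := by
  funext w
  rw [pauliX_mulVec]
  simp only [Pi.single_apply]
  congr 1
  refine propext ⟨fun h => ?_, fun h => ?_⟩
  · rw [← h, flipv_flipv]
  · rw [h, flipv_flipv]

lemma WH_irred (σ : WH n →* Matrix.unitaryGroup (Fin n → Fin 2) ℂ) (hσ : sigmaCond n σ)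
    (W : Submodule ℂ ((Fin n → Fin 2) → ℂ))
    (hW : ∀ g : WH n, ∀ v ∈ W,
      (σ g : Matrix (Fin n → Fin 2) (Fin n → Fin 2) ℂ).mulVec v ∈ W) :
    W = ⊥ ∨ W = ⊤ := by
  by_cases hbot : W = ⊥
  · exact Or.inl hbot
  right
  obtain ⟨v, hvW, hv0⟩ := (Submodule.ne_bot_iff W).mp hbot
  obtain ⟨w, hw⟩ := Function.ne_iff.mp hv0
  simp only [Pi.zero_apply] at hw
  have Zmem : ∀ i : Fin n, ∀ u ∈ W, (pauliZ n i).mulVec u ∈ W := by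
    intro i u hu
    have := hW (WHZ i) u hu
    rwa [hσ.2.2 i] at this
  have Xmem : ∀ i : Fin n, ∀ u ∈ W, (pauliX n i).mulVec u ∈ W := by
    intro i u hu
    have := hW (WHX i) u hu
    rwa [hσ.2.1 i] at this
  have key : ∀ k : ℕ, ∃ u ∈ W, ∀ w', u w' =
      if ∀ i : Fin n, (i:ℕ) < k → w' i = w i then v w' else 0 := by
    intro k
    induction k with
    | zero => exact ⟨v, hvW, fun w' => by simp⟩
    | succ k ih =>
      obtain ⟨u, huW, hu⟩ := ih
      by_cases hk : k < n
      · set i : Fin n := ⟨k, hk⟩ with hidef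
        refine ⟨(2⁻¹ : ℂ) • (u + ((-1:ℂ) ^ (w i : ℕ)) • (pauliZ n i).mulVec u),
          W.smul_mem _ (W.add_mem huW (W.smul_mem _ (Zmem i u huW))), fun w' => ?_⟩
        have hval : ((2⁻¹:ℂ) • (u + ((-1:ℂ) ^ (w i : ℕ)) • (pauliZ n i).mulVec u)) w'
            = 2⁻¹ * (u w' + ((-1:ℂ) ^ (w i : ℕ) * (-1) ^ (w' i : ℕ)) * u w') := by
          simp only [Pi.smul_apply, Pi.add_apply, smul_eq_mul, pauliZ_mulVec]
          ring
        rw [hval, hu w', fin2_sign_mul]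
        by_cases hall : ∀ i' : Fin n, (i':ℕ) < k + 1 → w' i' = w i'
        · rw [if_pos hall, if_pos (fun i' hlt => hall i' (Nat.lt_succ_of_lt hlt)),
            if_pos (hall i (Nat.lt_succ_self k)).symm]
          ring
        · rw [if_neg hall]
          push_neg at hall
          obtain ⟨i₀, hi₀lt, hne⟩ := hall
          by_cases hi₀k : (i₀:ℕ) < k
          · rw [if_neg (fun hh : ∀ i' : Fin n, (i':ℕ) < k → w' i' = w i' =>
              hne (hh i₀ hi₀k))]
            simp
          · have hio : (i₀:ℕ) = k := by omega
            have : i₀ = i := Fin.ext (by rw [hio, hidef])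
            subst this
            rw [if_neg (fun hh : w i = w' i => hne hh.symm)]
            ring
      · refine ⟨u, huW, fun w' => ?_⟩
        rw [hu w']
        have hiff : (∀ i : Fin n, (i:ℕ) < k → w' i = w i) ↔
            (∀ i : Fin n, (i:ℕ) < k + 1 → w' i = w i) := by
          constructor <;> intro hh i _ <;> exact hh i (by have := i.2; omega)
        exact if_congr hiff rfl rfl
  obtain ⟨u, huW, hu⟩ := key n
  have huw : u w = v w := by rw [hu w, if_pos (fun i _ => rfl)]
  have huz : ∀ w', w' ≠ w → u w' = 0 := by
    intro w' hne
    rw [hu w', if_neg]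
    intro hh
    exact hne (funext fun i => hh i i.2)
  have hsingle : Pi.single w (1:ℂ) ∈ W := by
    have heq : Pi.single w (1:ℂ) = (v w)⁻¹ • u := by
      funext w'
      by_cases h : w' = w
      · subst h
        simp [Pi.single_apply, huw, inv_mul_cancel₀ hw]
      · simp [Pi.single_apply, h, huz w' h]
    rw [heq]
    exact W.smul_mem _ huW
  have key2 : ∀ k : ℕ, ∀ w' : Fin n → Fin 2, (∀ i : Fin n, k ≤ (i:ℕ) → w' i = w i) →
      Pi.single w' (1:ℂ) ∈ W := by
    intro k
    induction k with
    | zero =>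
      intro w' h
      have : w' = w := funext fun i => h i (Nat.zero_le _)
      rwa [this]
    | succ k ih =>
      intro w' h
      by_cases hk : k < n
      · set i : Fin n := ⟨k, hk⟩ with hidef
        have hcond : ∀ j : Fin n, k ≤ (j:ℕ) → Function.update w' i (w i) j = w j := by
          intro j hj
          by_cases hji : j = i
          · subst hji; rw [Function.update_self]
          · rw [Function.update_of_ne hji]
            apply h
            have hne : (j:ℕ) ≠ k := fun hc => hji (Fin.ext hc)
            omega
        have hmem := ih _ hcond
        by_cases hc : w' i = w i
        · have : Function.update w' i (w i) = w' := by rw [← hc, Function.update_eq_self]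
          rwa [this] at hmem
        · have hflip : w' = flipv i (Function.update w' i (w i)) := by
            funext j
            by_cases hj : j = i
            · subst hj
              rw [flipv_apply_self, Function.update_self]
              exact fin2_ne _ _ hc
            · rw [flipv_apply_ne _ _ hj, Function.update_of_ne hj]
          rw [hflip, ← single_flip]
          exact Xmem i _ hmem
      · refine ih w' (fun j hj => absurd hj ?_)
        have := j.2
        omega
  have hall : ∀ w' : Fin n → Fin 2, Pi.single w' (1:ℂ) ∈ W :=
    fun w' => key2 n w' (fun i hi => absurd i.2 (by omega))
  rw [Submodule.eq_top_iff']
  intro x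
  have hx : x = ∑ w' : Fin n → Fin 2, Pi.single w' (x w') := (Finset.univ_sum_single x).symm
  rw [hx]
  refine Submodule.sum_mem W (fun w' _ => ?_)
  have : Pi.single w' (x w') = x w' • (Pi.single w' 1 : (Fin n → Fin 2) → ℂ) := by
    funext a
    simp only [Pi.single_apply, Pi.smul_apply, smul_eq_mul, mul_ite, mul_one, mul_zero]
  rw [this]
  exact W.smul_mem _ (hall w')

end irr

/-- There is a unique group homomorphism `σ : H(n) → U((ℂ²)^{⊗n})` with `σ(J) = −1`,
`σ(X_i) = σ_X(e_i)` and `σ(Z_i) = σ_Z(e_i)`; moreover this representation is irreducible: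
its only invariant subspaces are `{0}` and the whole space. -/
theorem WH_sigma_exists_unique_and_irreducible (n : ℕ) :
    (∃! σ : WH n →* Matrix.unitaryGroup (Fin n → Fin 2) ℂ, sigmaCond n σ) ∧
    (∀ σ : WH n →* Matrix.unitaryGroup (Fin n → Fin 2) ℂ, sigmaCond n σ →
      ∀ W : Submodule ℂ ((Fin n → Fin 2) → ℂ),
        (∀ g : WH n, ∀ v ∈ W,
          (σ g : Matrix (Fin n → Fin 2) (Fin n → Fin 2) ℂ).mulVec v ∈ W) →
        W = ⊥ ∨ W = ⊤) := by
  refine ⟨⟨PresentedGroup.toGroup rels_hold, ⟨?_, fun i => ?_, fun i => ?_⟩, fun σ' h' => ?_⟩,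
    fun σ hσ W hW => WH_irred σ hσ W hW⟩
  · rw [show WHJ n = PresentedGroup.of WHGen.J from rfl, PresentedGroup.toGroup.of]
    rfl
  · rw [show WHX i = PresentedGroup.of (WHGen.X i) from rfl, PresentedGroup.toGroup.of]
    rfl
  · rw [show WHZ i = PresentedGroup.of (WHGen.Z i) from rfl, PresentedGroup.toGroup.of]
    rfl
  · apply PresentedGroup.ext
    intro x
    rw [PresentedGroup.toGroup.of]
    cases x with
    | J => exact Subtype.ext h'.1
    | X i => exact Subtype.ext (h'.2.1 i)
    | Z i => exact Subtype.ext (h'.2.2 i)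
end

section
/- Let n ≥ 1 and let ψ ∈ C^{2^n} ⊗ C^{2^n} be a unit vector satisfying (1/(4n)) Σ_{a,b∈{0,1}} Σ_{i∈[n]} ⟨ψ| (σ_X(e_i)^a σ_Z(e_i)^b ⊗ σ_X(e_i)^a σ_Z(e_i)^b) |ψ⟩ ≥ 1 − δ for some δ with 0 ≤ δ ≤ 1/n. Then |⟨ψ | EPR^{⊗n}⟩|² ≥ 1 − nδ. -/
open Matrix
open scoped Kronecker

/-- The matrix `σ_X(e_i)^a σ_Z(e_i)^b` for `a, b ∈ {0,1}`. -/
noncomputable def pauliTerm (n : ℕ) (a b : Fin 2) (i : Fin n) :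
    Matrix (Fin n → Fin 2) (Fin n → Fin 2) ℂ :=
  pauliX n i ^ (a : ℕ) * pauliZ n i ^ (b : ℕ)

/-- The `n`-fold EPR state `2^{-n/2} Σ_{x ∈ {0,1}^n} |x⟩ ⊗ |x⟩` in `ℂ^{2^n} ⊗ ℂ^{2^n}`. -/
noncomputable def eprVec (n : ℕ) : ((Fin n → Fin 2) × (Fin n → Fin 2)) → ℂ :=
  fun p => if p.1 = p.2 then ((Real.sqrt (2 ^ n) : ℝ) : ℂ)⁻¹ else 0


namespace EPRaux

def b0 : Fin 4 → Fin 2 → Fin 2 → ℤ := fun s x y =>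
  if s = 0 then (if x = y then 1 else 0)
  else if s = 1 then (if x = y then (if x = 0 then 1 else -1) else 0)
  else if s = 2 then (if x = y then 0 else 1)
  else (if x = y then 0 else (if x = 0 then 1 else -1))
def lam (a b : Fin 2) (s : Fin 4) : ℤ :=
  (if a = 1 ∧ (s = 1 ∨ s = 3) then -1 else 1) *
  (if b = 1 ∧ (s = 2 ∨ s = 3) then -1 else 1)
def pent (a b : Fin 2) (x y : Fin 2) : ℤ :=
  if y = x + a then (if b = 1 ∧ y = 1 then -1 else 1) else 0
lemma L1 : ∀ x y x' y' : Fin 2,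
    (∑ s : Fin 4, b0 s x y * b0 s x' y') =
      if x = x' ∧ y = y' then 2 else 0 := by decide
lemma L2 : ∀ (a b : Fin 2) (x y x' y' : Fin 2),
    (∑ s : Fin 4, lam a b s * (b0 s x y * b0 s x' y')) =
      2 * (pent a b x x' * pent a b y y') := by decide
lemma neg_one_pow_fin (x : Fin 2) : ((-1 : ℂ)) ^ (x : ℕ) = ((if (1:Fin 2) = 1 ∧ x = 1 then (-1:ℤ) else 1 : ℤ) : ℂ) := by
  fin_cases x <;> simp
lemma pauliTerm_apply (n : ℕ) (a b : Fin 2) (i : Fin n) (v w : Fin n → Fin 2) :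
    pauliTerm n a b i v w =
      if w = Function.update v i (v i + a) then ((pent a b (v i) (w i) : ℤ) : ℂ) else 0 := by
  fin_cases a <;> fin_cases b <;>
    simp only [pauliTerm, Fin.isValue, Fin.val_zero, Fin.val_one, pow_zero, pow_one, one_mul,
      mul_one, pent, Fin.mk_one, Fin.mk_zero]
  · rw [Matrix.one_apply]
    simp only [add_zero, Function.update_eq_self]
    by_cases h : w = v
    · subst h; simp
    · simp [h, Ne.symm h]
  · simp only [pauliZ, Matrix.of_apply, add_zero, Function.update_eq_self]
    by_cases h : w = v
    · subst h; simp [neg_one_pow_fin]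
    · simp [h, Ne.symm h]
  · simp only [pauliX, Matrix.of_apply]
    by_cases h : w = Function.update v i (v i + 1)
    · subst h; simp [Function.update_apply]
    · simp [h]
  · rw [Matrix.mul_apply]
    simp only [pauliX, pauliZ, Matrix.of_apply, ite_mul, one_mul, zero_mul, mul_ite, ite_self]
    rw [Finset.sum_ite_eq' Finset.univ w]
    by_cases h : w = Function.update v i (v i + 1)
    · subst h
      simp [Function.update_apply, neg_one_pow_fin]
    · simp [h]

lemma pauliTerm_eq_prod (n : ℕ) (a b : Fin 2) (i : Fin n) (v w : Fin n → Fin 2) :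
    pauliTerm n a b i v w =
      ∏ j, (if j = i then ((pent a b (v j) (w j) : ℤ) : ℂ) else if w j = v j then 1 else 0) := by
  rw [pauliTerm_apply]
  rw [← Finset.mul_prod_erase Finset.univ _ (Finset.mem_univ i), if_pos rfl]
  rw [Finset.prod_congr rfl (fun j hj => if_neg (Finset.ne_of_mem_erase hj))]
  rw [Finset.prod_boole]
  by_cases h1 : ∀ j ∈ Finset.univ.erase i, w j = v j
  · by_cases h2 : w i = v i + a
    · have hw : w = Function.update v i (v i + a) := by
        funext j
        by_cases hj : j = i
        · subst hj; simp [h2]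
        · rw [Function.update_apply, if_neg hj]
          exact h1 j (Finset.mem_erase.mpr ⟨hj, Finset.mem_univ j⟩)
      rw [if_pos hw, if_pos h1, mul_one]
    · have hw : w ≠ Function.update v i (v i + a) := by
        intro hc; apply h2; rw [hc]; simp
      rw [if_neg hw, pent, if_neg h2]
      simp
  · have hw : w ≠ Function.update v i (v i + a) := by
      intro hc
      apply h1
      intro j hj
      rw [hc, Function.update_apply, if_neg (Finset.ne_of_mem_erase hj)]
    rw [if_neg hw, if_neg h1, mul_zero]

lemma kron_apply_eq (n : ℕ) (a b : Fin 2) (i : Fin n) (v w v' w' : Fin n → Fin 2) :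
    (pauliTerm n a b i ⊗ₖ pauliTerm n a b i) (v, w) (v', w') * (2:ℂ)^n
      = ∑ t : Fin n → Fin 4, ((lam a b (t i) : ℤ) : ℂ) *
          ∏ j, ((b0 (t j) (v j) (w j) * b0 (t j) (v' j) (w' j) : ℤ) : ℂ) := by
  have step1 : ∀ t : Fin n → Fin 4,
      ((lam a b (t i) : ℤ) : ℂ) * ∏ j, ((b0 (t j) (v j) (w j) * b0 (t j) (v' j) (w' j) : ℤ) : ℂ)
      = ∏ j, ((if j = i then ((lam a b (t j) : ℤ) : ℂ) else 1) *
          ((b0 (t j) (v j) (w j) * b0 (t j) (v' j) (w' j) : ℤ) : ℂ)) := by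
    intro t
    rw [Finset.prod_mul_distrib, Finset.prod_ite_eq' Finset.univ i
      (fun j => ((lam a b (t j) : ℤ) : ℂ)), if_pos (Finset.mem_univ i)]
  rw [Finset.sum_congr rfl (fun t _ => step1 t),
    ← Fintype.prod_sum (fun (j : Fin n) (s : Fin 4) =>
        (if j = i then ((lam a b s : ℤ) : ℂ) else 1) *
          ((b0 s (v j) (w j) * b0 s (v' j) (w' j) : ℤ) : ℂ))]
  have key : ∀ j, (∑ s : Fin 4, (if j = i then ((lam a b s : ℤ) : ℂ) else 1) *
        ((b0 s (v j) (w j) * b0 s (v' j) (w' j) : ℤ) : ℂ))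
      = 2 * ((if j = i then ((pent a b (v j) (v' j) : ℤ) : ℂ) else if v' j = v j then 1 else 0) *
             (if j = i then ((pent a b (w j) (w' j) : ℤ) : ℂ) else if w' j = w j then 1 else 0)) := by
    intro j
    by_cases hj : j = i
    · subst hj
      simp only [eq_self_iff_true, if_true]
      rw [show (∑ s : Fin 4, ((lam a b s : ℤ) : ℂ) * ((b0 s (v j) (w j) * b0 s (v' j) (w' j) : ℤ) : ℂ))
          = (((∑ s : Fin 4, lam a b s * (b0 s (v j) (w j) * b0 s (v' j) (w' j))) : ℤ) : ℂ) by push_cast; simp [mul_assoc]]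
      rw [L2]
      push_cast
      ring
    · simp only [if_neg hj, one_mul]
      rw [show (∑ s : Fin 4, ((b0 s (v j) (w j) * b0 s (v' j) (w' j) : ℤ) : ℂ))
          = (((∑ s : Fin 4, b0 s (v j) (w j) * b0 s (v' j) (w' j)) : ℤ) : ℂ) by push_cast; simp [mul_assoc]]
      rw [L1]
      by_cases h1 : v j = v' j <;> by_cases h2 : w j = w' j <;>
        simp [h1, h2, eq_comm] <;> norm_num
  rw [Finset.prod_congr rfl (fun j _ => key j), Finset.prod_mul_distrib, Finset.prod_const,
    Finset.card_univ, Fintype.card_fin, Finset.prod_mul_distrib]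
  rw [← pauliTerm_eq_prod, ← pauliTerm_eq_prod]
  simp [Matrix.kroneckerMap_apply]
  ring

variable {n : ℕ}

noncomputable def dcoef (n : ℕ) (ψ : ((Fin n → Fin 2) × (Fin n → Fin 2)) → ℂ)
    (t : Fin n → Fin 4) : ℂ :=
  ∑ p : (Fin n → Fin 2) × (Fin n → Fin 2), (∏ j, ((b0 (t j) (p.1 j) (p.2 j) : ℤ) : ℂ)) * ψ p

lemma conj_dcoef (ψ : ((Fin n → Fin 2) × (Fin n → Fin 2)) → ℂ) (t : Fin n → Fin 4) :
    (starRingEnd ℂ) (dcoef n ψ t)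
      = ∑ p : (Fin n → Fin 2) × (Fin n → Fin 2),
          (∏ j, ((b0 (t j) (p.1 j) (p.2 j) : ℤ) : ℂ)) * (starRingEnd ℂ) (ψ p) := by
  rw [dcoef, map_sum]
  refine Finset.sum_congr rfl fun p _ => ?_
  rw [_root_.map_mul, _root_.map_prod]
  simp

lemma form_eq (a b : Fin 2) (i : Fin n) (ψ : ((Fin n → Fin 2) × (Fin n → Fin 2)) → ℂ) :
    (star ψ ⬝ᵥ ((pauliTerm n a b i ⊗ₖ pauliTerm n a b i) *ᵥ ψ)) * (2:ℂ)^n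
      = ∑ t : Fin n → Fin 4, ((lam a b (t i) : ℤ) : ℂ) *
          ((starRingEnd ℂ) (dcoef n ψ t) * dcoef n ψ t) := by
  have kron' : ∀ p q : (Fin n → Fin 2) × (Fin n → Fin 2),
      (pauliTerm n a b i ⊗ₖ pauliTerm n a b i) p q * (2:ℂ)^n
        = ∑ t : Fin n → Fin 4, ((lam a b (t i) : ℤ) : ℂ) *
            ((∏ j, ((b0 (t j) (p.1 j) (p.2 j) : ℤ) : ℂ)) *
             (∏ j, ((b0 (t j) (q.1 j) (q.2 j) : ℤ) : ℂ))) := by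
    intro p q
    have h := kron_apply_eq n a b i p.1 p.2 q.1 q.2
    rw [Prod.mk.eta, Prod.mk.eta] at h
    rw [h]
    refine Finset.sum_congr rfl fun t _ => ?_
    rw [← Finset.prod_mul_distrib]
    push_cast
    ring_nf
  have expand : star ψ ⬝ᵥ ((pauliTerm n a b i ⊗ₖ pauliTerm n a b i) *ᵥ ψ)
      = ∑ p, ∑ q, (starRingEnd ℂ) (ψ p) * ψ q *
          ((pauliTerm n a b i ⊗ₖ pauliTerm n a b i) p q) := by
    simp only [dotProduct, mulVec, Pi.star_apply, RCLike.star_def, Finset.mul_sum]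
    refine Finset.sum_congr rfl fun p _ => Finset.sum_congr rfl fun q _ => by ring
  rw [expand, Finset.sum_mul]
  have step : ∀ p, (∑ q, (starRingEnd ℂ) (ψ p) * ψ q *
        ((pauliTerm n a b i ⊗ₖ pauliTerm n a b i) p q)) * (2:ℂ)^n
      = ∑ t : Fin n → Fin 4, ∑ q, ((lam a b (t i) : ℤ) : ℂ) *
          (((∏ j, ((b0 (t j) (p.1 j) (p.2 j) : ℤ) : ℂ)) * (starRingEnd ℂ) (ψ p)) *
           ((∏ j, ((b0 (t j) (q.1 j) (q.2 j) : ℤ) : ℂ)) * ψ q)) := by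
    intro p
    rw [Finset.sum_mul, ← Finset.sum_comm]
    refine Finset.sum_congr rfl fun q _ => ?_
    rw [mul_assoc, kron' p q, Finset.mul_sum]
    refine Finset.sum_congr rfl fun t _ => by ring
  rw [Finset.sum_congr rfl fun p _ => step p, Finset.sum_comm]
  refine Finset.sum_congr rfl fun t _ => ?_
  rw [conj_dcoef, dcoef, Finset.sum_mul_sum, Finset.mul_sum]
  refine Finset.sum_congr rfl fun p _ => ?_
  rw [Finset.mul_sum]

lemma Bsum (p q : (Fin n → Fin 2) × (Fin n → Fin 2)) :
    (∑ t : Fin n → Fin 4, (∏ j, ((b0 (t j) (p.1 j) (p.2 j) : ℤ) : ℂ)) *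
        (∏ j, ((b0 (t j) (q.1 j) (q.2 j) : ℤ) : ℂ)))
      = if p = q then (2:ℂ)^n else 0 := by
  have h1 : ∀ t : Fin n → Fin 4,
      (∏ j, ((b0 (t j) (p.1 j) (p.2 j) : ℤ) : ℂ)) * (∏ j, ((b0 (t j) (q.1 j) (q.2 j) : ℤ) : ℂ))
      = ∏ j, ((b0 (t j) (p.1 j) (p.2 j) * b0 (t j) (q.1 j) (q.2 j) : ℤ) : ℂ) := by
    intro t
    rw [← Finset.prod_mul_distrib]
    push_cast
    ring_nf
  rw [Finset.sum_congr rfl fun t _ => h1 t,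
    ← Fintype.prod_sum (fun (j : Fin n) (s : Fin 4) =>
        ((b0 s (p.1 j) (p.2 j) * b0 s (q.1 j) (q.2 j) : ℤ) : ℂ))]
  have h2 : ∀ j, (∑ s : Fin 4, ((b0 s (p.1 j) (p.2 j) * b0 s (q.1 j) (q.2 j) : ℤ) : ℂ))
      = 2 * (if p.1 j = q.1 j ∧ p.2 j = q.2 j then 1 else 0) := by
    intro j
    rw [show (∑ s : Fin 4, ((b0 s (p.1 j) (p.2 j) * b0 s (q.1 j) (q.2 j) : ℤ) : ℂ))
        = (((∑ s : Fin 4, b0 s (p.1 j) (p.2 j) * b0 s (q.1 j) (q.2 j)) : ℤ) : ℂ) by push_cast; ring_nf]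
    rw [L1]
    by_cases h : p.1 j = q.1 j ∧ p.2 j = q.2 j <;> simp [h]
  rw [Finset.prod_congr rfl fun j _ => h2 j, Finset.prod_mul_distrib, Finset.prod_const,
    Finset.card_univ, Fintype.card_fin, Finset.prod_boole]
  by_cases h : p = q
  · subst h; simp
  · have : ¬ ∀ j ∈ Finset.univ, p.1 j = q.1 j ∧ p.2 j = q.2 j := by
      intro hc
      exact h (Prod.ext (funext fun j => (hc j (Finset.mem_univ j)).1)
        (funext fun j => (hc j (Finset.mem_univ j)).2))
    rw [if_neg this, if_neg h, mul_zero]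

lemma parseval (ψ : ((Fin n → Fin 2) × (Fin n → Fin 2)) → ℂ) :
    ∑ t : Fin n → Fin 4, (starRingEnd ℂ) (dcoef n ψ t) * dcoef n ψ t
      = (2:ℂ)^n * (star ψ ⬝ᵥ ψ) := by
  have h1 : ∀ t, (starRingEnd ℂ) (dcoef n ψ t) * dcoef n ψ t
      = ∑ p, ∑ q, ((∏ j, ((b0 (t j) (p.1 j) (p.2 j) : ℤ) : ℂ)) *
          (∏ j, ((b0 (t j) (q.1 j) (q.2 j) : ℤ) : ℂ))) * ((starRingEnd ℂ) (ψ p) * ψ q) := by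
    intro t
    rw [conj_dcoef, dcoef, Finset.sum_mul_sum]
    exact Finset.sum_congr rfl fun p _ => Finset.sum_congr rfl fun q _ => by ring
  rw [Finset.sum_congr rfl fun t _ => h1 t, Finset.sum_comm]
  have h2 : ∀ p, (∑ t : Fin n → Fin 4, ∑ q, ((∏ j, ((b0 (t j) (p.1 j) (p.2 j) : ℤ) : ℂ)) *
          (∏ j, ((b0 (t j) (q.1 j) (q.2 j) : ℤ) : ℂ))) * ((starRingEnd ℂ) (ψ p) * ψ q))
      = (2:ℂ)^n * ((starRingEnd ℂ) (ψ p) * ψ p) := by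
    intro p
    rw [Finset.sum_comm]
    have h3 : ∀ q, (∑ t : Fin n → Fin 4, ((∏ j, ((b0 (t j) (p.1 j) (p.2 j) : ℤ) : ℂ)) *
          (∏ j, ((b0 (t j) (q.1 j) (q.2 j) : ℤ) : ℂ))) * ((starRingEnd ℂ) (ψ p) * ψ q))
        = (if q = p then (2:ℂ)^n else 0) * ((starRingEnd ℂ) (ψ p) * ψ q) := by
      intro q
      rw [← Finset.sum_mul, Bsum]
      by_cases h : p = q
      · subst h; simp
      · rw [if_neg h, if_neg (Ne.symm h)]
    rw [Finset.sum_congr rfl fun q _ => h3 q]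
    simp only [ite_mul, zero_mul]
    rw [Finset.sum_ite_eq' Finset.univ p]
    simp
  rw [Finset.sum_congr rfl fun p _ => h2 p, ← Finset.mul_sum]
  congr 1


lemma dcoef_zero (ψ : ((Fin n → Fin 2) × (Fin n → Fin 2)) → ℂ) :
    dcoef n ψ (fun _ => 0) = ∑ p : (Fin n → Fin 2) × (Fin n → Fin 2),
      (if p.1 = p.2 then 1 else 0) * ψ p := by
  refine Finset.sum_congr rfl fun p _ => ?_
  congr 1
  have : ∀ j : Fin n, ((b0 0 (p.1 j) (p.2 j) : ℤ) : ℂ) = if p.1 j = p.2 j then 1 else 0 := by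
    intro j
    by_cases h : p.1 j = p.2 j <;> simp [b0, h]
  rw [Finset.prod_congr rfl fun j _ => this j, Finset.prod_boole]
  by_cases h : p.1 = p.2
  · rw [if_pos (fun i _ => congrFun h i), if_pos h]
  · rw [if_neg, if_neg h]
    intro hc
    exact h (funext fun j => hc j (Finset.mem_univ j))

lemma epr_overlap (ψ : ((Fin n → Fin 2) × (Fin n → Fin 2)) → ℂ) :
    ‖star ψ ⬝ᵥ eprVec n‖ ^ 2
      = Complex.normSq (dcoef n ψ (fun _ => 0)) / 2 ^ n := by
  have h1 : star ψ ⬝ᵥ eprVec n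
      = ((Real.sqrt (2 ^ n) : ℝ) : ℂ)⁻¹ * (starRingEnd ℂ) (dcoef n ψ (fun _ => 0)) := by
    rw [dcoef_zero, map_sum]
    rw [dotProduct, Finset.mul_sum]
    refine Finset.sum_congr rfl fun p _ => ?_
    rw [_root_.map_mul]
    by_cases h : p.1 = p.2 <;> simp [eprVec, h] <;> ring
  rw [h1, norm_mul, mul_pow, Complex.sq_norm, Complex.sq_norm, Complex.normSq_conj]
  have h2 : Complex.normSq (((Real.sqrt (2 ^ n) : ℝ) : ℂ)⁻¹) = (2 ^ n)⁻¹ := by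
    rw [Complex.normSq_inv, Complex.normSq_ofReal, Real.mul_self_sqrt (by positivity)]
  rw [h2]
  ring

lemma count_ineq (N : (Fin n → Fin 4) → ℝ) (hN : ∀ t, 0 ≤ N t) :
    (∑ t, N t) - N (fun _ => 0) ≤ ∑ i : Fin n, ∑ t, (if t i ≠ 0 then N t else 0) := by
  rw [Finset.sum_comm]
  have h0 : (∑ t, N t) - N (fun _ => 0)
      = ∑ t ∈ Finset.univ.erase (fun _ => 0), N t := by
    rw [Finset.sum_erase_eq_sub (Finset.mem_univ _)]
  rw [h0]
  have hsub : ∑ t ∈ Finset.univ.erase (fun _ => 0), N t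
      ≤ ∑ t ∈ Finset.univ.erase (fun _ => 0), ∑ i : Fin n, (if t i ≠ 0 then N t else 0) := by
    refine Finset.sum_le_sum fun t ht => ?_
    have htne : t ≠ fun _ => 0 := (Finset.mem_erase.mp ht).1
    have : ∃ i, t i ≠ 0 := by
      by_contra hc
      push_neg at hc
      exact htne (funext hc)
    obtain ⟨i, hi⟩ := this
    have := Finset.single_le_sum (f := fun i : Fin n => if t i ≠ 0 then N t else 0)
      (fun i _ => by by_cases h : t i ≠ 0 <;> simp [h, hN t]) (Finset.mem_univ i)
    simpa [hi] using this
  refine hsub.trans ?_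
  refine Finset.sum_le_sum_of_subset_of_nonneg (Finset.subset_univ _) fun t _ _ => ?_
  refine Finset.sum_nonneg fun i _ => ?_
  by_cases h : t i ≠ 0 <;> simp [h, hN t]


lemma lamsum : ∀ s : Fin 4, (∑ a : Fin 2, ∑ b : Fin 2, lam a b s) = if s = 0 then 4 else 0 := by
  decide

end EPRaux

open EPRaux in
/-- If a unit vector `ψ ∈ ℂ^{2^n} ⊗ ℂ^{2^n}` has average single-qubit Pauli correlation at
least `1 − δ` with `0 ≤ δ ≤ 1/n`, then `|⟨ψ|EPR^{⊗n}⟩|² ≥ 1 − nδ`. -/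
theorem epr_stability (n : ℕ) (hn : 1 ≤ n)
    (ψ : ((Fin n → Fin 2) × (Fin n → Fin 2)) → ℂ)
    (hψ : star ψ ⬝ᵥ ψ = 1)
    (δ : ℝ) (hδ0 : 0 ≤ δ) (hδ1 : δ ≤ 1 / n)
    (hcorr : (1 / (4 * n : ℝ)) *
        ∑ a : Fin 2, ∑ b : Fin 2, ∑ i : Fin n,
          (star ψ ⬝ᵥ ((pauliTerm n a b i ⊗ₖ pauliTerm n a b i) *ᵥ ψ)).re
      ≥ 1 - δ) :
    ‖star ψ ⬝ᵥ eprVec n‖ ^ 2 ≥ 1 - n * δ := by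
  classical
  have h2n : (0:ℝ) < 2 ^ n := by positivity
  have hNnn : ∀ t : Fin n → Fin 4, 0 ≤ Complex.normSq (dcoef n ψ t) :=
    fun t => Complex.normSq_nonneg _
  -- Parseval
  have hP : ∑ t : Fin n → Fin 4, Complex.normSq (dcoef n ψ t) = 2 ^ n := by
    have h := parseval (n := n) ψ
    rw [hψ, mul_one] at h
    have h2 : ((∑ t : Fin n → Fin 4, Complex.normSq (dcoef n ψ t) : ℝ) : ℂ)
        = ((2 ^ n : ℝ) : ℂ) := by
      calc ((∑ t : Fin n → Fin 4, Complex.normSq (dcoef n ψ t) : ℝ) : ℂ)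
          = ∑ t : Fin n → Fin 4, ((Complex.normSq (dcoef n ψ t) : ℝ) : ℂ) := by push_cast; rfl
        _ = ∑ t : Fin n → Fin 4, (starRingEnd ℂ) (dcoef n ψ t) * dcoef n ψ t :=
            Finset.sum_congr rfl fun t _ => by rw [mul_comm, Complex.mul_conj]
        _ = (2:ℂ) ^ n := h
        _ = ((2 ^ n : ℝ) : ℂ) := by push_cast; rfl
    exact_mod_cast h2
  -- key identity per a b i
  have key : ∀ (a b : Fin 2) (i : Fin n),
      (star ψ ⬝ᵥ ((pauliTerm n a b i ⊗ₖ pauliTerm n a b i) *ᵥ ψ)).re * 2 ^ n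
        = ∑ t : Fin n → Fin 4, (lam a b (t i) : ℝ) * Complex.normSq (dcoef n ψ t) := by
    intro a b i
    have h := form_eq a b i ψ
    have h2 : ((2 ^ n : ℝ) : ℂ) * (star ψ ⬝ᵥ ((pauliTerm n a b i ⊗ₖ pauliTerm n a b i) *ᵥ ψ))
        = ((∑ t : Fin n → Fin 4, (lam a b (t i) : ℝ) * Complex.normSq (dcoef n ψ t) : ℝ) : ℂ) := by
      have hcast : ((2 ^ n : ℝ) : ℂ) = (2:ℂ) ^ n := by push_cast; rfl
      rw [hcast, mul_comm, h]
      push_cast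
      refine Finset.sum_congr rfl fun t _ => ?_
      rw [mul_comm ((starRingEnd ℂ) (dcoef n ψ t)) (dcoef n ψ t), Complex.mul_conj]
    have h3 := congrArg Complex.re h2
    rw [Complex.re_ofReal_mul, Complex.ofReal_re] at h3
    linarith [h3]
  -- sum over a b, per i
  have key2 : ∀ i : Fin n,
      (∑ a : Fin 2, ∑ b : Fin 2,
          (star ψ ⬝ᵥ ((pauliTerm n a b i ⊗ₖ pauliTerm n a b i) *ᵥ ψ)).re) * 2 ^ n
        = 4 * ∑ t : Fin n → Fin 4, (if t i = 0 then Complex.normSq (dcoef n ψ t) else 0) := by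
    intro i
    rw [Finset.sum_mul]
    rw [Finset.sum_congr rfl fun a _ => Finset.sum_mul _ _ _]
    rw [Finset.sum_congr rfl fun a _ => Finset.sum_congr rfl fun b _ => key a b i]
    rw [Finset.sum_congr rfl fun a _ => Finset.sum_comm, Finset.sum_comm]
    rw [Finset.mul_sum]
    refine Finset.sum_congr rfl fun t _ => ?_
    rw [← Finset.sum_congr rfl fun a _ => Finset.sum_mul _ _ (Complex.normSq (dcoef n ψ t)),
      ← Finset.sum_mul]
    have : (∑ a : Fin 2, ∑ b : Fin 2, (lam a b (t i) : ℝ))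
        = ((∑ a : Fin 2, ∑ b : Fin 2, lam a b (t i) : ℤ) : ℝ) := by push_cast; rfl
    rw [this, lamsum (t i)]
    by_cases h : t i = 0 <;> simp [h]
  -- complement
  have hcompl : ∀ i : Fin n,
      ∑ t : Fin n → Fin 4, (if t i ≠ 0 then Complex.normSq (dcoef n ψ t) else 0)
        = 2 ^ n - ∑ t : Fin n → Fin 4, (if t i = 0 then Complex.normSq (dcoef n ψ t) else 0) := by
    intro i
    rw [← hP, ← Finset.sum_sub_distrib]
    refine Finset.sum_congr rfl fun t _ => ?_
    by_cases h : t i = 0 <;> simp [h]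
  -- counting inequality
  have hcount := count_ineq (fun t => Complex.normSq (dcoef n ψ t)) hNnn
  rw [Finset.sum_congr rfl fun i (_ : i ∈ Finset.univ) => hcompl i] at hcount
  rw [Finset.sum_sub_distrib, Finset.sum_const, Finset.card_univ, Fintype.card_fin] at hcount
  simp only [nsmul_eq_mul] at hcount
  -- lower bound on the correlation sum
  set S : ℝ := ∑ a : Fin 2, ∑ b : Fin 2, ∑ i : Fin n,
      (star ψ ⬝ᵥ ((pauliTerm n a b i ⊗ₖ pauliTerm n a b i) *ᵥ ψ)).re with hSdef
  have hn0 : (0:ℝ) < n := by exact_mod_cast hn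
  have hS : (1 - δ) * (4 * n) ≤ S := by
    have h1 : (1 / (4 * (n:ℝ)) * S) * (4 * n) = S := by field_simp
    nlinarith [mul_le_mul_of_nonneg_right hcorr (by positivity : (0:ℝ) ≤ 4 * n), h1]
  -- S * 2^n = 4 * ∑ i G i
  have hStot : S * 2 ^ n = 4 * ∑ i : Fin n,
      ∑ t : Fin n → Fin 4, (if t i = 0 then Complex.normSq (dcoef n ψ t) else 0) := by
    have hswap : S = ∑ i : Fin n, ∑ a : Fin 2, ∑ b : Fin 2,
        (star ψ ⬝ᵥ ((pauliTerm n a b i ⊗ₖ pauliTerm n a b i) *ᵥ ψ)).re := by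
      rw [hSdef, Finset.sum_congr rfl fun a (_ : a ∈ Finset.univ) => Finset.sum_comm,
        Finset.sum_comm]
    rw [hswap, Finset.sum_mul, Finset.mul_sum]
    exact Finset.sum_congr rfl fun i _ => key2 i
  -- conclude
  rw [epr_overlap ψ, ge_iff_le, le_div_iff₀ h2n]
  have hGS : (1 - δ) * n * 2 ^ n ≤ ∑ i : Fin n,
      ∑ t : Fin n → Fin 4, (if t i = 0 then Complex.normSq (dcoef n ψ t) else 0) := by
    nlinarith [mul_le_mul_of_nonneg_right hS (le_of_lt h2n)]
  linarith [hcount, hGS, hP]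
end

section
/- Let n ≥ 1 and define the operator S := (1/(4n)) Σ_{a,b∈{0,1}} Σ_{i∈[n]} σ_X(e_i)^a σ_Z(e_i)^b ⊗ σ_X(e_i)^a σ_Z(e_i)^b on C^{2^n} ⊗ C^{2^n}. Then S is positive semidefinite, S |EPR^{⊗n}⟩ = |EPR^{⊗n}⟩, and every unit vector ψ ∈ C^{2^n} ⊗ C^{2^n} orthogonal to |EPR^{⊗n}⟩ satisfies ⟨ψ| S |ψ⟩ ≤ (n−1)/n; in particular, |EPR^{⊗n}⟩ spans the eigenspace of S for eigenvalue 1. -/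
open Matrix
open scoped Kronecker ComplexOrder

/-- The averaged two-sided Pauli correlation operator
`S = (1/(4n)) Σ_{a,b∈{0,1}} Σ_i σ_X(e_i)^a σ_Z(e_i)^b ⊗ σ_X(e_i)^a σ_Z(e_i)^b`. -/
noncomputable def eprTestOp (n : ℕ) :
    Matrix (((Fin n → Fin 2) × (Fin n → Fin 2))) (((Fin n → Fin 2) × (Fin n → Fin 2))) ℂ :=
  (1 / (4 * n : ℂ)) •
    ∑ a : Fin 2, ∑ b : Fin 2, ∑ i : Fin n, pauliTerm n a b i ⊗ₖ pauliTerm n a b i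

-- basic Fin 2 facts
lemma fin2_aa : ∀ x : Fin 2, x + 1 + 1 = x := by decide
lemma fin2_ne_s9 : ∀ x : Fin 2, x + 1 ≠ x := by decide

-- basics about pauli matrices
lemma pauliX_mul_self (n : ℕ) (i : Fin n) : pauliX n i * pauliX n i = 1 := by
  ext v w
  rw [Matrix.mul_apply]
  simp only [pauliX, Matrix.of_apply]
  rw [Finset.sum_eq_single (Function.update v i (v i + 1))]
  · simp [Function.update_idem, fin2_aa, Matrix.one_apply, eq_comm]
  · intro u _ hu; rw [if_neg hu, zero_mul]
  · simp

lemma pauliZ_mul_self (n : ℕ) (i : Fin n) : pauliZ n i * pauliZ n i = 1 := by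
  ext v w
  rw [Matrix.mul_apply]
  simp only [pauliZ, Matrix.of_apply]
  rw [Finset.sum_eq_single v]
  · simp only [if_pos rfl]
    by_cases h : v = w
    · subst h; simp [Matrix.one_apply, ← pow_add]
    · simp [h, Matrix.one_apply, h]
  · intro u _ hu; rw [if_neg (fun h => hu h.symm), zero_mul]
  · simp

lemma pauliX_transpose (n : ℕ) (i : Fin n) : (pauliX n i)ᵀ = pauliX n i := by
  ext v w
  simp only [Matrix.transpose_apply, pauliX, Matrix.of_apply]
  congr 1
  apply propext
  constructor
  · rintro rfl; simp [Function.update_idem, fin2_aa]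
  · rintro rfl; simp [Function.update_idem, fin2_aa]

lemma pauliZ_transpose (n : ℕ) (i : Fin n) : (pauliZ n i)ᵀ = pauliZ n i := by
  ext v w
  simp only [Matrix.transpose_apply, pauliZ, Matrix.of_apply]
  by_cases h : v = w
  · subst h; simp
  · simp [h, Ne.symm h]

lemma pauliTerm_mul_transpose (n : ℕ) (a b : Fin 2) (i : Fin n) :
    pauliTerm n a b i * (pauliTerm n a b i)ᵀ = 1 := by
  fin_cases a <;> fin_cases b <;>
    simp only [pauliTerm, Fin.isValue, Fin.val_zero, Fin.val_one, pow_zero, pow_one, mul_one,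
      one_mul, Matrix.transpose_one, Matrix.transpose_mul, pauliX_transpose, pauliZ_transpose]
  all_goals first
    | rfl
    | exact pauliZ_mul_self n i
    | exact pauliX_mul_self n i
    | rw [mul_assoc, ← mul_assoc (pauliZ n i), pauliZ_mul_self, one_mul, pauliX_mul_self]

-- (A ⊗ₖ B) acting on the EPR vector
lemma kron_mulVec_epr (n : ℕ) (A B : Matrix (Fin n → Fin 2) (Fin n → Fin 2) ℂ) :
    (A ⊗ₖ B) *ᵥ eprVec n =
      fun p => ((Real.sqrt (2 ^ n) : ℝ) : ℂ)⁻¹ * (A * Bᵀ) p.1 p.2 := by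
  funext p
  simp only [Matrix.mulVec, dotProduct, Matrix.kroneckerMap_apply, eprVec]
  rw [Fintype.sum_prod_type]
  rw [Matrix.mul_apply]
  rw [Finset.mul_sum]
  refine Finset.sum_congr rfl fun x _ => ?_
  rw [Finset.sum_eq_single x]
  · simp [Matrix.transpose_apply]; ring
  · intro y _ hy; simp [Ne.symm hy]
  · simp

lemma pauliKron_mulVec_epr (n : ℕ) (a b : Fin 2) (i : Fin n) :
    (pauliTerm n a b i ⊗ₖ pauliTerm n a b i) *ᵥ eprVec n = eprVec n := by
  rw [kron_mulVec_epr, pauliTerm_mul_transpose]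
  funext p
  simp only [Matrix.one_apply, eprVec]
  by_cases h : p.1 = p.2 <;> simp [h]

lemma fin2_cases : ∀ x : Fin 2, x = 0 ∨ x = 1 := by decide

/-- The projector onto (Φ⁺ on the pairs in `s`) ⊗ (identity elsewhere). -/
noncomputable def Mmat (n : ℕ) (s : Finset (Fin n)) :
    Matrix ((Fin n → Fin 2) × (Fin n → Fin 2)) ((Fin n → Fin 2) × (Fin n → Fin 2)) ℂ :=
  Matrix.of fun p q =>
    if (∀ i ∈ s, p.1 i = p.2 i) ∧ (∀ i ∈ s, q.1 i = q.2 i) ∧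
        ∀ j ∉ s, p.1 j = q.1 j ∧ p.2 j = q.2 j
    then (2:ℂ)⁻¹ ^ s.card else 0

lemma Mmat_empty (n : ℕ) : Mmat n ∅ = 1 := by
  ext p q
  simp only [Mmat, Matrix.of_apply, Finset.notMem_empty, Finset.card_empty, pow_zero,
    Matrix.one_apply, not_false_iff, true_implies]
  refine if_congr ?_ rfl rfl
  constructor
  · rintro ⟨-, -, h⟩
    exact Prod.ext (funext fun j => (h j).1) (funext fun j => (h j).2)
  · rintro rfl; exact ⟨by simp, by simp, fun j => ⟨rfl, rfl⟩⟩

lemma Mmat_conjTranspose (n : ℕ) (s : Finset (Fin n)) : (Mmat n s)ᴴ = Mmat n s := by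
  ext p q
  simp only [Matrix.conjTranspose_apply, Mmat, Matrix.of_apply]
  rw [apply_ite star]
  refine if_congr ?_ (by simp) (by simp)
  constructor
  · rintro ⟨h1, h2, h3⟩
    exact ⟨h2, h1, fun j hj => ⟨((h3 j hj).1).symm, ((h3 j hj).2).symm⟩⟩
  · rintro ⟨h1, h2, h3⟩
    exact ⟨h2, h1, fun j hj => ⟨((h3 j hj).1).symm, ((h3 j hj).2).symm⟩⟩

lemma Mmat_single_apply (n : ℕ) (a : Fin n) (p r : (Fin n → Fin 2) × (Fin n → Fin 2)) :
    Mmat n {a} p r =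
      if p.1 a = p.2 a ∧ (r = (Function.update p.1 a 0, Function.update p.2 a 0) ∨
        r = (Function.update p.1 a 1, Function.update p.2 a 1)) then (2:ℂ)⁻¹ else 0 := by
  simp only [Mmat, Matrix.of_apply, Finset.mem_singleton, Finset.card_singleton, pow_one]
  refine if_congr ?_ rfl rfl
  constructor
  · rintro ⟨hp, hr, hoff⟩
    refine ⟨hp a rfl, ?_⟩
    have hr1 : r.1 = Function.update p.1 a (r.1 a) := by
      funext j
      rw [Function.update_apply]
      split
      · next h => rw [h]
      · next h => exact ((hoff j (by simpa using h)).1).symm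
    have hr2 : r.2 = Function.update p.2 a (r.1 a) := by
      funext j
      rw [Function.update_apply]
      split
      · next h => rw [h]; exact (hr a rfl).symm
      · next h => exact ((hoff j (by simpa using h)).2).symm
    rcases fin2_cases (r.1 a) with h | h
    · left; rw [← h]; exact Prod.ext hr1 hr2
    · right; rw [← h]; exact Prod.ext hr1 hr2
  · rintro ⟨hp, (rfl | rfl)⟩ <;>
      exact ⟨fun i hi => by subst hi; exact hp,
        fun i hi => by subst hi; simp,
        fun j hj => by simp [Function.update_apply, hj]⟩

lemma pauliTerm_zero_zero (n : ℕ) (i : Fin n) : pauliTerm n 0 0 i = 1 := by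
  simp [pauliTerm]

lemma pauliTerm_zero_one (n : ℕ) (i : Fin n) : pauliTerm n 0 1 i = pauliZ n i := by
  simp [pauliTerm]

lemma pauliTerm_one_zero (n : ℕ) (i : Fin n) : pauliTerm n 1 0 i = pauliX n i := by
  simp [pauliTerm]

lemma pauliTerm_one_one (n : ℕ) (i : Fin n) :
    pauliTerm n 1 1 i = pauliX n i * pauliZ n i := by
  simp [pauliTerm]

lemma XZ_apply (n : ℕ) (i : Fin n) (v w : Fin n → Fin 2) :
    (pauliX n i * pauliZ n i) v w =
      if w = Function.update v i (v i + 1) then (-1 : ℂ) ^ (w i : ℕ) else 0 := by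
  rw [Matrix.mul_apply]
  rw [Finset.sum_eq_single (Function.update v i (v i + 1))]
  · simp only [pauliX, pauliZ, Matrix.of_apply]
    by_cases h : w = Function.update v i (v i + 1)
    · subst h; simp
    · rw [if_true, one_mul, if_neg (fun hh => h hh.symm), if_neg h]
  · intro u _ hu
    simp only [pauliX, Matrix.of_apply]
    rw [if_neg hu, zero_mul]
  · simp


lemma fin2_ne_iff : ∀ c x : Fin 2, c ≠ x ↔ c = x + 1 := by decide

lemma signSum (x y : Fin 2) : (1 : ℂ) + (-1) ^ (x : ℕ) * (-1) ^ (y : ℕ) =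
    if x = y then 2 else 0 := by
  rcases fin2_cases x with hx | hx <;> rcases fin2_cases y with hy | hy <;>
    subst hx <;> subst hy <;> norm_num

lemma e_mem (n : ℕ) (i : Fin n) (p q : (Fin n → Fin 2) × (Fin n → Fin 2))
    (hd : p.1 i = p.2 i)
    (h : (p.1 = q.1 ∧ p.2 = q.2) ∨
      (q.1 = Function.update p.1 i (p.1 i + 1) ∧ q.2 = Function.update p.2 i (p.2 i + 1))) :
    q = (Function.update p.1 i 0, Function.update p.2 i 0) ∨
      q = (Function.update p.1 i 1, Function.update p.2 i 1) := by
  have e01 : (0 : Fin 2) + 1 = 1 := rfl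
  have e11 : (1 : Fin 2) + 1 = 0 := rfl
  rcases h with ⟨ha, hb⟩ | ⟨ha, hb⟩
  · rcases fin2_cases (p.1 i) with hx | hx
    · left
      refine Prod.ext ?_ ?_ <;> simp only
      · rw [← ha, ← hx, Function.update_eq_self]
      · rw [← hb, ← hd.symm.trans hx, Function.update_eq_self]
    · right
      refine Prod.ext ?_ ?_ <;> simp only
      · rw [← ha, ← hx, Function.update_eq_self]
      · rw [← hb, ← hd.symm.trans hx, Function.update_eq_self]
  · rcases fin2_cases (p.1 i) with hx | hx
    · right
      refine Prod.ext ?_ ?_ <;> simp only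
      · rw [ha, hx, e01]
      · rw [hb, hd.symm.trans hx, e01]
    · left
      refine Prod.ext ?_ ?_ <;> simp only
      · rw [ha, hx, e11]
      · rw [hb, hd.symm.trans hx, e11]

lemma e_cases (n : ℕ) (i : Fin n) (p q : (Fin n → Fin 2) × (Fin n → Fin 2))
    (hd : p.1 i = p.2 i)
    (h : q = (Function.update p.1 i 0, Function.update p.2 i 0) ∨
      q = (Function.update p.1 i 1, Function.update p.2 i 1)) :
    (p.1 = q.1 ∧ p.2 = q.2) ∨
      (q.1 = Function.update p.1 i (p.1 i + 1) ∧ q.2 = Function.update p.2 i (p.2 i + 1)) := by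
  have e01 : (0 : Fin 2) + 1 = 1 := rfl
  have e11 : (1 : Fin 2) + 1 = 0 := rfl
  rcases h with rfl | rfl <;> simp only
  · rcases fin2_cases (p.1 i) with hx | hx
    · left
      constructor
      · rw [← hx, Function.update_eq_self]
      · rw [← hd.symm.trans hx, Function.update_eq_self]
    · right
      constructor
      · rw [hx, e11]
      · rw [hd.symm.trans hx, e11]
  · rcases fin2_cases (p.1 i) with hx | hx
    · right
      constructor
      · rw [hx, e01]
      · rw [hd.symm.trans hx, e01]
    · left
      constructor
      · rw [← hx, Function.update_eq_self]
      · rw [← hd.symm.trans hx, Function.update_eq_self]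

lemma pauli_sum_eq (n : ℕ) (i : Fin n) :
    ∑ a : Fin 2, ∑ b : Fin 2, (pauliTerm n a b i ⊗ₖ pauliTerm n a b i)
      = (4 : ℂ) • Mmat n {i} := by
  ext p q
  simp only [Matrix.sum_apply, Matrix.add_apply, Matrix.smul_apply, Fin.sum_univ_two,
    pauliTerm_zero_zero, pauliTerm_zero_one, pauliTerm_one_zero, pauliTerm_one_one,
    Matrix.kroneckerMap_apply, smul_eq_mul]
  simp only [XZ_apply]
  simp only [Mmat_single_apply, Matrix.one_apply, pauliZ, pauliX, Matrix.of_apply]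
  rw [show (if p.1 i = p.2 i ∧
        (q = (Function.update p.1 i 0, Function.update p.2 i 0) ∨
          q = (Function.update p.1 i 1, Function.update p.2 i 1)) then (2:ℂ)⁻¹ else 0)
      = if p.1 i = p.2 i ∧ ((p.1 = q.1 ∧ p.2 = q.2) ∨
          (q.1 = Function.update p.1 i (p.1 i + 1) ∧
            q.2 = Function.update p.2 i (p.2 i + 1))) then (2:ℂ)⁻¹ else 0 from
    if_congr (and_congr_right fun hd => ⟨e_cases n i p q hd, e_mem n i p q hd⟩) rfl rfl]
  by_cases h1 : p.1 = q.1
  · have h3 : ¬ q.1 = Function.update p.1 i (p.1 i + 1) := by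
      rw [← h1, Function.eq_update_self_iff]
      exact fun hc => fin2_ne_s9 _ hc.symm
    by_cases h2 : p.2 = q.2
    · have h4 : ¬ q.2 = Function.update p.2 i (p.2 i + 1) := by
        rw [← h2, Function.eq_update_self_iff]
        exact fun hc => fin2_ne_s9 _ hc.symm
      simp only [if_pos h1, if_pos h2, if_neg h3, if_neg h4, one_mul, mul_zero, zero_mul,
        add_zero, zero_add]
      rw [signSum]
      rw [show (if p.1 i = p.2 i ∧ ((p.1 = q.1 ∧ p.2 = q.2) ∨
          (q.1 = Function.update p.1 i (p.1 i + 1) ∧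
            q.2 = Function.update p.2 i (p.2 i + 1))) then (2:ℂ)⁻¹ else 0)
          = if p.1 i = p.2 i then (2:ℂ)⁻¹ else 0 from
        if_congr (and_iff_left (Or.inl ⟨h1, h2⟩)) rfl rfl]
      by_cases hd : p.1 i = p.2 i
      · rw [if_pos hd, if_pos hd]; norm_num
      · rw [if_neg hd, if_neg hd]; norm_num
    · simp only [if_neg h2, if_neg h3, mul_zero, zero_mul, add_zero, zero_add]
      rw [if_neg ?_]
      · ring
      · rintro ⟨hd, (⟨-, hb⟩ | ⟨ha, -⟩)⟩
        · exact h2 hb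
        · exact h3 ha
  · by_cases h3 : q.1 = Function.update p.1 i (p.1 i + 1)
    · by_cases h4 : q.2 = Function.update p.2 i (p.2 i + 1)
      · simp only [if_neg h1, if_pos h3, if_pos h4, one_mul, mul_zero, zero_mul,
          add_zero, zero_add]
        rw [signSum]
        have hq1 : q.1 i = p.1 i + 1 := by rw [h3]; exact Function.update_self i _ _
        have hq2 : q.2 i = p.2 i + 1 := by rw [h4]; exact Function.update_self i _ _
        rw [show (if p.1 i = p.2 i ∧ ((p.1 = q.1 ∧ p.2 = q.2) ∨
            (q.1 = Function.update p.1 i (p.1 i + 1) ∧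
              q.2 = Function.update p.2 i (p.2 i + 1))) then (2:ℂ)⁻¹ else 0)
            = if p.1 i = p.2 i then (2:ℂ)⁻¹ else 0 from
          if_congr (and_iff_left (Or.inr ⟨h3, h4⟩)) rfl rfl]
        have hiff : q.1 i = q.2 i ↔ p.1 i = p.2 i := by
          rw [hq1, hq2]; exact add_left_inj 1
        rw [show (if q.1 i = q.2 i then (2:ℂ) else 0) = if p.1 i = p.2 i then 2 else 0 from
          if_congr hiff rfl rfl]
        by_cases hd : p.1 i = p.2 i
        · rw [if_pos hd, if_pos hd]; norm_num
        · rw [if_neg hd, if_neg hd]; norm_num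
      · simp only [if_neg h1, if_neg h4, mul_zero, zero_mul, add_zero, zero_add]
        rw [if_neg ?_]
        · ring
        · rintro ⟨hd, (⟨ha, -⟩ | ⟨-, hb⟩)⟩
          · exact h1 ha
          · exact h4 hb
    · simp only [if_neg h1, if_neg h3, mul_zero, zero_mul, add_zero, zero_add]
      rw [if_neg ?_]
      · ring
      · rintro ⟨hd, (⟨ha, -⟩ | ⟨hb, -⟩)⟩
        · exact h1 ha
        · exact h3 hb

lemma E_ne (n : ℕ) (a : Fin n) (p : (Fin n → Fin 2) × (Fin n → Fin 2)) :
    ((Function.update p.1 a 0, Function.update p.2 a 0) :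
        (Fin n → Fin 2) × (Fin n → Fin 2)) ≠
      (Function.update p.1 a 1, Function.update p.2 a 1) := by
  intro hc
  have h : (0 : Fin 2) = 1 := by
    have h1 : Function.update p.1 a 0 = Function.update p.1 a 1 := congrArg Prod.fst hc
    have h2 := congrFun h1 a
    rwa [Function.update_self, Function.update_self] at h2
  exact absurd h (by decide)

lemma Mmat_single_mul (n : ℕ) (a : Fin n) (s : Finset (Fin n)) :
    Mmat n {a} * Mmat n s = Mmat n (insert a s) := by
  ext p q
  rw [Matrix.mul_apply]
  have step1 : ∀ r, Mmat n {a} p r * Mmat n s r q =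
      (if p.1 a = p.2 a then (2:ℂ)⁻¹ else 0) *
        ((if r = (Function.update p.1 a 0, Function.update p.2 a 0)
            then Mmat n s r q else 0) +
         (if r = (Function.update p.1 a 1, Function.update p.2 a 1)
            then Mmat n s r q else 0)) := by
    intro r
    rw [Mmat_single_apply]
    by_cases hp : p.1 a = p.2 a
    · by_cases h0 : r = (Function.update p.1 a 0, Function.update p.2 a 0)
      · subst h0
        rw [if_pos ⟨hp, Or.inl rfl⟩, if_pos hp, if_pos rfl, if_neg (E_ne n a p), add_zero]
      · by_cases h1 : r = (Function.update p.1 a 1, Function.update p.2 a 1)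
        · subst h1
          rw [if_pos ⟨hp, Or.inr rfl⟩, if_pos hp, if_neg (fun hc => E_ne n a p hc.symm),
            if_pos rfl, zero_add]
        · rw [if_neg (fun hc => hc.2.elim h0 h1), if_pos hp, if_neg h0, if_neg h1]
          simp
    · rw [if_neg (fun hc => hp hc.1), if_neg hp]
      simp
  rw [Finset.sum_congr rfl (fun r _ => step1 r), ← Finset.mul_sum, Finset.sum_add_distrib,
    Fintype.sum_ite_eq', Fintype.sum_ite_eq']
  by_cases hp : p.1 a = p.2 a
  swap
  · rw [if_neg hp, zero_mul, Mmat, Matrix.of_apply,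
      if_neg (fun hc => hp (hc.1 a (Finset.mem_insert_self a s)))]
  rw [if_pos hp]
  by_cases ha : a ∈ s
  · -- insert a s = s, and both summands equal `Mmat n s p q`
    rw [Finset.insert_eq_self.mpr ha]
    have claim : ∀ c : Fin 2,
        Mmat n s (Function.update p.1 a c, Function.update p.2 a c) q = Mmat n s p q := by
      intro c
      simp only [Mmat, Matrix.of_apply]
      refine if_congr (and_congr ?_ (and_congr_right fun _ => ?_)) rfl rfl
      · constructor
        · intro h i hi
          by_cases hia : i = a
          · exact hia ▸ hp
          · have := h i hi
            rwa [Function.update_of_ne hia, Function.update_of_ne hia] at this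
        · intro h i hi
          by_cases hia : i = a
          · subst hia; rw [Function.update_self, Function.update_self]
          · rw [Function.update_of_ne hia, Function.update_of_ne hia]; exact h i hi
      · constructor
        · intro h j hj
          have hja : j ≠ a := fun hc => hj (hc ▸ ha)
          have := h j hj
          rwa [Function.update_of_ne hja, Function.update_of_ne hja] at this
        · intro h j hj
          have hja : j ≠ a := fun hc => hj (hc ▸ ha)
          rw [Function.update_of_ne hja, Function.update_of_ne hja]
          exact h j hj
    rw [claim 0, claim 1]
    ring
  · -- a ∉ s
    have claim : ∀ c : Fin 2,
        Mmat n s (Function.update p.1 a c, Function.update p.2 a c) q =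
          if c = q.1 a ∧ c = q.2 a ∧ ((∀ i ∈ s, p.1 i = p.2 i) ∧ (∀ i ∈ s, q.1 i = q.2 i) ∧
              ∀ j ∉ s, j ≠ a → p.1 j = q.1 j ∧ p.2 j = q.2 j)
          then (2:ℂ)⁻¹ ^ s.card else 0 := by
      intro c
      simp only [Mmat, Matrix.of_apply]
      refine if_congr ?_ rfl rfl
      constructor
      · rintro ⟨h1, h2, h3⟩
        have hA := h3 a ha
        rw [Function.update_self, Function.update_self] at hA
        refine ⟨hA.1, hA.2, ?_, h2, ?_⟩
        · intro i hi
          have hia : i ≠ a := fun hc => ha (hc ▸ hi)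
          have := h1 i hi
          rwa [Function.update_of_ne hia, Function.update_of_ne hia] at this
        · intro j hj hja
          have := h3 j hj
          rwa [Function.update_of_ne hja, Function.update_of_ne hja] at this
      · rintro ⟨hc1, hc2, h1, h2, h3⟩
        refine ⟨?_, h2, ?_⟩
        · intro i hi
          have hia : i ≠ a := fun hc => ha (hc ▸ hi)
          rw [Function.update_of_ne hia, Function.update_of_ne hia]
          exact h1 i hi
        · intro j hj
          by_cases hja : j = a
          · subst hja
            rw [Function.update_self, Function.update_self]
            exact ⟨hc1, hc2⟩
          · rw [Function.update_of_ne hja, Function.update_of_ne hja]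
            exact h3 j hj hja
    rw [claim 0, claim 1]
    have hins : ((∀ i ∈ insert a s, p.1 i = p.2 i) ∧ (∀ i ∈ insert a s, q.1 i = q.2 i) ∧
        ∀ j ∉ insert a s, p.1 j = q.1 j ∧ p.2 j = q.2 j) ↔
        (q.1 a = q.2 a ∧ ((∀ i ∈ s, p.1 i = p.2 i) ∧ (∀ i ∈ s, q.1 i = q.2 i) ∧
          ∀ j ∉ s, j ≠ a → p.1 j = q.1 j ∧ p.2 j = q.2 j)) := by
      constructor
      · rintro ⟨h1, h2, h3⟩
        refine ⟨h2 a (Finset.mem_insert_self a s),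
          fun i hi => h1 i (Finset.mem_insert_of_mem hi),
          fun i hi => h2 i (Finset.mem_insert_of_mem hi),
          fun j hj hja => h3 j (fun hc => ?_)⟩
        rcases Finset.mem_insert.mp hc with hc | hc
        · exact hja hc
        · exact hj hc
      · rintro ⟨hq, h1, h2, h3⟩
        refine ⟨?_, ?_, ?_⟩
        · intro i hi
          rcases Finset.mem_insert.mp hi with rfl | hi
          · exact hp
          · exact h1 i hi
        · intro i hi
          rcases Finset.mem_insert.mp hi with rfl | hi
          · exact hq
          · exact h2 i hi
        · intro j hj
          exact h3 j (fun hc => hj (Finset.mem_insert_of_mem hc))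
            (fun hc => hj (hc ▸ Finset.mem_insert_self a s))
    rw [Mmat, Matrix.of_apply, show (if ((∀ i ∈ insert a s, p.1 i = p.2 i) ∧
        (∀ i ∈ insert a s, q.1 i = q.2 i) ∧
        ∀ j ∉ insert a s, p.1 j = q.1 j ∧ p.2 j = q.2 j)
        then (2:ℂ)⁻¹ ^ (insert a s).card else 0)
        = if (q.1 a = q.2 a ∧ ((∀ i ∈ s, p.1 i = p.2 i) ∧ (∀ i ∈ s, q.1 i = q.2 i) ∧
          ∀ j ∉ s, j ≠ a → p.1 j = q.1 j ∧ p.2 j = q.2 j))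
          then (2:ℂ)⁻¹ ^ (insert a s).card else 0 from if_congr hins rfl rfl,
      Finset.card_insert_of_notMem ha]
    by_cases hD : (∀ i ∈ s, p.1 i = p.2 i) ∧ (∀ i ∈ s, q.1 i = q.2 i) ∧
        ∀ j ∉ s, j ≠ a → p.1 j = q.1 j ∧ p.2 j = q.2 j
    swap
    · rw [if_neg (fun hc => hD hc.2.2), if_neg (fun hc => hD hc.2.2),
        if_neg (fun hc => hD hc.2)]
      ring
    by_cases hq : q.1 a = q.2 a
    · rcases fin2_cases (q.1 a) with hx | hx
      · rw [if_pos ⟨hx.symm, (hq.symm.trans hx).symm, hD⟩,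
          if_neg (fun hc => absurd (hc.1.trans hx) (by decide)),
          if_pos ⟨hq, hD⟩]
        rw [pow_succ]
        ring
      · rw [if_neg (fun hc => absurd (hc.1.trans hx) (by decide)),
          if_pos ⟨hx.symm, (hq.symm.trans hx).symm, hD⟩, if_pos ⟨hq, hD⟩]
        rw [pow_succ]
        ring
    · rw [if_neg (fun hc => hq ((hc.1).symm.trans hc.2.1)),
        if_neg (fun hc => hq ((hc.1).symm.trans hc.2.1)), if_neg (fun hc => hq hc.1)]
      ring

lemma Mmat_mul (n : ℕ) (s t : Finset (Fin n)) :
    Mmat n s * Mmat n t = Mmat n (s ∪ t) := by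
  induction s using Finset.induction_on with
  | empty => rw [Mmat_empty, one_mul, Finset.empty_union]
  | @insert a s ha ih =>
    rw [← Mmat_single_mul, mul_assoc, ih, Mmat_single_mul, Finset.insert_union]

lemma Mmat_posSemidef (n : ℕ) (s : Finset (Fin n)) : (Mmat n s).PosSemidef := by
  have h := Matrix.posSemidef_conjTranspose_mul_self (Mmat n s)
  rwa [Mmat_conjTranspose, Mmat_mul, Finset.union_self] at h

lemma one_sub_Mmat_idem (n : ℕ) (s : Finset (Fin n)) :
    (1 - Mmat n s) * (1 - Mmat n s) = 1 - Mmat n s := by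
  have h : Mmat n s * Mmat n s = Mmat n s := by rw [Mmat_mul, Finset.union_self]
  simp only [sub_mul, mul_sub, one_mul, mul_one, h]
  abel

lemma one_sub_Mmat_posSemidef (n : ℕ) (s : Finset (Fin n)) : (1 - Mmat n s).PosSemidef := by
  have h := Matrix.posSemidef_conjTranspose_mul_self (1 - Mmat n s)
  have herm : (1 - Mmat n s)ᴴ = 1 - Mmat n s := by
    rw [Matrix.conjTranspose_sub, Matrix.conjTranspose_one, Mmat_conjTranspose]
  rwa [herm, one_sub_Mmat_idem] at h

lemma unionBound (n : ℕ) (s : Finset (Fin n)) :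
    ((∑ i ∈ s, (1 - Mmat n {i})) + Mmat n s - 1).PosSemidef := by
  induction s using Finset.induction_on with
  | empty =>
    rw [Finset.sum_empty, Mmat_empty, zero_add, sub_self]
    exact Matrix.PosSemidef.zero
  | @insert a s ha ih =>
    have key : (∑ i ∈ insert a s, (1 - Mmat n {i})) + Mmat n (insert a s) - 1
        = ((∑ i ∈ s, (1 - Mmat n {i})) + Mmat n s - 1)
          + (1 - Mmat n {a}) * (1 - Mmat n s) := by
      rw [Finset.sum_insert ha, ← Mmat_single_mul]
      noncomm_ring
    rw [key]
    refine Matrix.PosSemidef.add ih ?_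
    have hcomm : (1 - Mmat n s) * (1 - Mmat n {a}) = (1 - Mmat n {a}) * (1 - Mmat n s) := by
      have hAB : Mmat n s * Mmat n {a} = Mmat n {a} * Mmat n s := by
        rw [Mmat_mul, Mmat_mul, Finset.union_comm]
      simp only [sub_mul, mul_sub, one_mul, mul_one]
      rw [hAB]
      abel
    have herm : (1 - Mmat n {a})ᴴ = 1 - Mmat n {a} := by
      rw [Matrix.conjTranspose_sub, Matrix.conjTranspose_one, Mmat_conjTranspose]
    have hidem : (1 - Mmat n {a}) * (1 - Mmat n {a}) = 1 - Mmat n {a} :=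
      one_sub_Mmat_idem n {a}
    have key2 : (1 - Mmat n {a}) * (1 - Mmat n s) * (1 - Mmat n {a})
        = (1 - Mmat n {a}) * (1 - Mmat n s) := by
      rw [mul_assoc, hcomm, ← mul_assoc, hidem]
    have hpsd := (one_sub_Mmat_posSemidef n s).conjTranspose_mul_mul_same (1 - Mmat n {a})
    rw [herm, key2] at hpsd
    exact hpsd

lemma my_sum_mulVec {ι β : Type*} [DecidableEq ι] [Fintype β] [DecidableEq β] (s : Finset ι)
    (f : ι → Matrix β β ℂ) (v : β → ℂ) :
    (∑ i ∈ s, f i) *ᵥ v = ∑ i ∈ s, f i *ᵥ v := by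
  induction s using Finset.induction_on with
  | empty => simp [Matrix.zero_mulVec]
  | @insert a s ha ih =>
    rw [Finset.sum_insert ha, Finset.sum_insert ha, Matrix.add_mulVec, ih]

lemma S_eq (n : ℕ) (hn : (n : ℂ) ≠ 0) :
    eprTestOp n = (n : ℂ)⁻¹ • ∑ i : Fin n, Mmat n {i} := by
  rw [eprTestOp]
  have h1 : ∑ a : Fin 2, ∑ b : Fin 2, ∑ i : Fin n, pauliTerm n a b i ⊗ₖ pauliTerm n a b i
      = ∑ i : Fin n, ∑ a : Fin 2, ∑ b : Fin 2, pauliTerm n a b i ⊗ₖ pauliTerm n a b i := by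
    calc ∑ a : Fin 2, ∑ b : Fin 2, ∑ i : Fin n, pauliTerm n a b i ⊗ₖ pauliTerm n a b i
        = ∑ a : Fin 2, ∑ i : Fin n, ∑ b : Fin 2, pauliTerm n a b i ⊗ₖ pauliTerm n a b i :=
          Finset.sum_congr rfl fun a _ => Finset.sum_comm
      _ = ∑ i : Fin n, ∑ a : Fin 2, ∑ b : Fin 2, pauliTerm n a b i ⊗ₖ pauliTerm n a b i :=
          Finset.sum_comm
  rw [h1]
  have h2 : ∀ i : Fin n, ∑ a : Fin 2, ∑ b : Fin 2, pauliTerm n a b i ⊗ₖ pauliTerm n a b i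
      = (4 : ℂ) • Mmat n {i} := pauli_sum_eq n
  rw [Finset.sum_congr rfl fun i _ => h2 i, ← Finset.smul_sum, smul_smul]
  congr 1
  field_simp

lemma Mmat_single_mulVec_epr (n : ℕ) (i : Fin n) :
    Mmat n {i} *ᵥ eprVec n = eprVec n := by
  have h := congrArg (fun M => M *ᵥ eprVec n) (pauli_sum_eq n i)
  rw [my_sum_mulVec] at h
  simp only [my_sum_mulVec, pauliKron_mulVec_epr] at h
  simp only [Finset.sum_const, Finset.card_univ, Fintype.card_fin, smul_smul] at h
  -- h : 2 • 2 • eprVec n = (4:ℂ) • Mmat n {i} *ᵥ eprVec n  (roughly)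
  have h4 : (4 : ℂ) • eprVec n = (4 : ℂ) • (Mmat n {i} *ᵥ eprVec n) := by
    rw [Matrix.smul_mulVec] at h
    rw [← h]
    funext p
    simp only [Pi.smul_apply, nsmul_eq_mul, smul_eq_mul]
    norm_num
  have := smul_right_injective (((Fin n → Fin 2) × (Fin n → Fin 2)) → ℂ)
    (show (4:ℂ) ≠ 0 by norm_num) h4
  exact this.symm

lemma dot_sum {ι β : Type*} [Fintype β] (s : Finset ι) (v : β → ℂ) (w : ι → β → ℂ) :
    v ⬝ᵥ (∑ i ∈ s, w i) = ∑ i ∈ s, v ⬝ᵥ w i := by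
  simp only [dotProduct, Finset.sum_apply, Finset.mul_sum]
  exact Finset.sum_comm

lemma star_dot_swap {β : Type*} [Fintype β] (x y : β → ℂ) :
    star x ⬝ᵥ y = star (star y ⬝ᵥ x) := by
  simp only [dotProduct, star_sum, Pi.star_apply, star_mul', star_star]
  exact Finset.sum_congr rfl fun q _ => mul_comm _ _

lemma nonneg_inv_nat_mul (n : ℕ) (z : ℂ) (hz : 0 ≤ z) : 0 ≤ ((n : ℂ))⁻¹ * z := by
  have h0 : (0:ℂ) ≤ ((n : ℂ))⁻¹ := by
    have h : ((n:ℂ))⁻¹ = ((((n:ℝ))⁻¹ : ℝ) : ℂ) := by push_cast; ring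
    rw [h, Complex.zero_le_real]
    positivity
  exact mul_nonneg h0 hz

lemma epr_norm_aux (n : ℕ) :
    (((Real.sqrt (2 ^ n) : ℝ) : ℂ))⁻¹ * (((Real.sqrt (2 ^ n) : ℝ) : ℂ))⁻¹ = (2:ℂ)⁻¹ ^ n := by
  rw [← mul_inv, ← Complex.ofReal_mul, Real.mul_self_sqrt (by positivity)]
  rw [show ((2:ℝ)^n : ℝ) = ((2:ℝ))^n from rfl, Complex.ofReal_pow, ← inv_pow]
  norm_num

lemma Mmat_univ_apply (n : ℕ) (p q : (Fin n → Fin 2) × (Fin n → Fin 2)) :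
    Mmat n Finset.univ p q = if p.1 = p.2 ∧ q.1 = q.2 then (2:ℂ)⁻¹ ^ n else 0 := by
  simp only [Mmat, Matrix.of_apply]
  rw [show (Finset.univ : Finset (Fin n)).card = n by
    rw [Finset.card_univ, Fintype.card_fin]]
  refine if_congr ?_ rfl rfl
  constructor
  · rintro ⟨h1, h2, -⟩
    exact ⟨funext fun i => h1 i (Finset.mem_univ i), funext fun i => h2 i (Finset.mem_univ i)⟩
  · rintro ⟨h1, h2⟩
    exact ⟨fun i _ => congrFun h1 i, fun i _ => congrFun h2 i,
      fun j hj => absurd (Finset.mem_univ j) hj⟩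

lemma Mmat_univ_mulVec (n : ℕ) (ψ : ((Fin n → Fin 2) × (Fin n → Fin 2)) → ℂ) :
    Mmat n Finset.univ *ᵥ ψ = (star (eprVec n) ⬝ᵥ ψ) • eprVec n := by
  funext p
  simp only [Matrix.mulVec, dotProduct, Pi.smul_apply, smul_eq_mul, Pi.star_apply,
    Finset.sum_mul, Mmat_univ_apply, eprVec]
  refine Finset.sum_congr rfl fun q _ => ?_
  by_cases h1 : p.1 = p.2
  · by_cases h2 : q.1 = q.2
    · rw [if_pos ⟨h1, h2⟩, if_pos h2, if_pos h1]
      rw [show star ((((Real.sqrt (2 ^ n) : ℝ) : ℂ))⁻¹) = (((Real.sqrt (2 ^ n) : ℝ) : ℂ))⁻¹ by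
        simp, ← epr_norm_aux n]
      ring
    · rw [if_neg (fun hc => h2 hc.2), if_neg h2]
      simp
  · by_cases h2 : q.1 = q.2
    · rw [if_neg (fun hc => h1 hc.1), if_neg h1]
      simp
    · rw [if_neg (fun hc => h1 hc.1), if_neg h1]
      simp


/-- The operator `S` is positive semidefinite, fixes the EPR state, and is bounded by
`(n−1)/n` on the orthogonal complement of the EPR state; in particular the EPR state spans
the eigenspace of `S` for eigenvalue `1`. -/
theorem eprTestOp_spectral_gap (n : ℕ) (hn : 1 ≤ n) :
    (eprTestOp n).PosSemidef ∧
    eprTestOp n *ᵥ eprVec n = eprVec n ∧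
    (∀ ψ : ((Fin n → Fin 2) × (Fin n → Fin 2)) → ℂ,
      star ψ ⬝ᵥ ψ = 1 → star ψ ⬝ᵥ eprVec n = 0 →
      (star ψ ⬝ᵥ (eprTestOp n *ᵥ ψ)).re ≤ ((n : ℝ) - 1) / n) ∧
    (∀ ψ : ((Fin n → Fin 2) × (Fin n → Fin 2)) → ℂ,
      eprTestOp n *ᵥ ψ = ψ → ∃ c : ℂ, ψ = c • eprVec n) := by
  have hn0 : (n:ℂ) ≠ 0 := Nat.cast_ne_zero.mpr (by omega)
  have hS := S_eq n hn0
  have hform : ∀ ψ : ((Fin n → Fin 2) × (Fin n → Fin 2)) → ℂ,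
      star ψ ⬝ᵥ (eprTestOp n *ᵥ ψ)
      = (n:ℂ)⁻¹ * ∑ i : Fin n, star ψ ⬝ᵥ (Mmat n {i} *ᵥ ψ) := by
    intro ψ
    rw [hS, Matrix.smul_mulVec, my_sum_mulVec, dotProduct_smul, dot_sum,
      smul_eq_mul]
  refine ⟨Matrix.posSemidef_iff_dotProduct_mulVec.mpr ⟨?_, ?_⟩, ?_, ?_, ?_⟩
  · show (eprTestOp n)ᴴ = eprTestOp n
    rw [hS, Matrix.conjTranspose_smul, Matrix.conjTranspose_sum]
    simp only [Mmat_conjTranspose]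
    congr 1
    simp
  · intro x
    rw [hform x]
    exact nonneg_inv_nat_mul n _ (Finset.sum_nonneg fun i _ => (Mmat_posSemidef n {i}).dotProduct_mulVec_nonneg x)
  · rw [hS, Matrix.smul_mulVec, my_sum_mulVec]
    simp only [Mmat_single_mulVec_epr]
    rw [Finset.sum_const, Finset.card_univ, Fintype.card_fin]
    funext p
    simp only [Pi.smul_apply, nsmul_eq_mul, Pi.mul_apply, Pi.natCast_apply, smul_eq_mul]
    rw [← mul_assoc, inv_mul_cancel₀ hn0, one_mul]
  · intro ψ hnorm horth
    have horth' : star (eprVec n) ⬝ᵥ ψ = 0 := by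
      rw [star_dot_swap, horth, star_zero]
    have hP0 : Mmat n Finset.univ *ᵥ ψ = 0 := by
      rw [Mmat_univ_mulVec, horth', zero_smul]
    have hub := (unionBound n Finset.univ).dotProduct_mulVec_nonneg ψ
    rw [Matrix.sub_mulVec, Matrix.add_mulVec, my_sum_mulVec, hP0, Matrix.one_mulVec,
      add_zero, dotProduct_sub, dot_sum, hnorm] at hub
    have hsub : ∀ i : Fin n, star ψ ⬝ᵥ ((1 - Mmat n {i}) *ᵥ ψ)
        = 1 - star ψ ⬝ᵥ (Mmat n {i} *ᵥ ψ) := by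
      intro i
      rw [Matrix.sub_mulVec, Matrix.one_mulVec, dotProduct_sub, hnorm]
    rw [Finset.sum_congr rfl (fun i _ => hsub i), Finset.sum_sub_distrib,
      Finset.sum_const, Finset.card_univ, Fintype.card_fin, nsmul_eq_mul, mul_one] at hub
    set T := ∑ i : Fin n, star ψ ⬝ᵥ (Mmat n {i} *ᵥ ψ) with hT
    have hTre : T.re ≤ (n:ℝ) - 1 := by
      have h := (Complex.le_def.mp hub).1
      simp only [Complex.sub_re, Complex.one_re, Complex.zero_re, Complex.natCast_re] at h
      linarith
    rw [hform ψ, ← hT]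
    have hre : (((n:ℂ))⁻¹ * T).re = ((n:ℝ))⁻¹ * T.re := by
      rw [show ((n:ℂ))⁻¹ = ((((n:ℝ))⁻¹ : ℝ) : ℂ) by push_cast; ring]
      simp [Complex.mul_re]
    rw [hre, div_eq_inv_mul]
    exact mul_le_mul_of_nonneg_left hTre (by positivity)
  · intro ψ hfix
    rw [hS, Matrix.smul_mulVec] at hfix
    have hsum : (∑ i : Fin n, Mmat n {i}) *ᵥ ψ = (n:ℂ) • ψ := by
      calc (∑ i : Fin n, Mmat n {i}) *ᵥ ψ
          = (n:ℂ) • ((n:ℂ)⁻¹ • ((∑ i : Fin n, Mmat n {i}) *ᵥ ψ)) := by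
            rw [smul_smul, mul_inv_cancel₀ hn0, one_smul]
        _ = (n:ℂ) • ψ := by rw [hfix]
    have hzero : ∀ i : Fin n, Mmat n {i} *ᵥ ψ = ψ := by
      have hv : ∑ i : Fin n, (ψ - Mmat n {i} *ᵥ ψ) = 0 := by
        rw [Finset.sum_sub_distrib, ← my_sum_mulVec, hsum, Finset.sum_const, Finset.card_univ,
          Fintype.card_fin]
        funext p
        simp only [Pi.sub_apply, Pi.smul_apply, nsmul_eq_mul, Pi.mul_apply, Pi.natCast_apply,
          smul_eq_mul, Pi.zero_apply]
        ring
      have hterm : ∀ i : Fin n, star (ψ - Mmat n {i} *ᵥ ψ) ⬝ᵥ (ψ - Mmat n {i} *ᵥ ψ)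
          = star ψ ⬝ᵥ (ψ - Mmat n {i} *ᵥ ψ) := by
        intro i
        have h1 : ψ - Mmat n {i} *ᵥ ψ = (1 - Mmat n {i}) *ᵥ ψ := by
          rw [Matrix.sub_mulVec, Matrix.one_mulVec]
        have herm : (1 - Mmat n {i})ᴴ = 1 - Mmat n {i} := by
          rw [Matrix.conjTranspose_sub, Matrix.conjTranspose_one, Mmat_conjTranspose]
        rw [h1, Matrix.star_mulVec, herm, Matrix.dotProduct_mulVec, Matrix.vecMul_vecMul,
          one_sub_Mmat_idem, ← Matrix.dotProduct_mulVec]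
      have hsum0 : ∑ i : Fin n, star (ψ - Mmat n {i} *ᵥ ψ) ⬝ᵥ (ψ - Mmat n {i} *ᵥ ψ) = 0 := by
        rw [Finset.sum_congr rfl (fun i _ => hterm i), ← dot_sum, hv, dotProduct_zero]
      intro i
      have hz := (Finset.sum_eq_zero_iff_of_nonneg
        (fun i _ => dotProduct_star_self_nonneg _)).mp hsum0 i (Finset.mem_univ i)
      have hzz := dotProduct_star_self_eq_zero.mp hz
      exact (sub_eq_zero.mp hzz).symm
    have hfixuniv : ∀ s : Finset (Fin n), Mmat n s *ᵥ ψ = ψ := by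
      intro s
      induction s using Finset.induction_on with
      | empty => rw [Mmat_empty, Matrix.one_mulVec]
      | @insert a s ha ih =>
        rw [← Mmat_single_mul, ← Matrix.mulVec_mulVec, ih]
        exact hzero a
    have hU := hfixuniv Finset.univ
    rw [Mmat_univ_mulVec] at hU
    exact ⟨star (eprVec n) ⬝ᵥ ψ, hU.symm⟩
end

section
/- Let H_A and H_B be finite-dimensional complex Hilbert spaces and ψ ∈ H_A ⊗ H_B a unit vector. Let A_1, A_2, A_3 be self-adjoint unitaries on H_A and B_1, B_2 self-adjoint unitaries on H_B with B_1 B_2 = B_2 B_1. Suppose ⟨ψ| (A_1 ⊗ B_1) |ψ⟩ ≥ 1 − ε_1, ⟨ψ| (A_2 ⊗ B_2) |ψ⟩ ≥ 1 − ε_2, and ⟨ψ| (A_3 ⊗ B_2 B_1) |ψ⟩ ≥ 1 − ε_3 for nonnegative reals ε_1, ε_2, ε_3. Then ‖((A_1 A_2 − A_3) ⊗ 1_{H_B}) ψ‖ ≤ √(2ε_1) + √(2ε_2) + √(2ε_3). -/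
open Matrix
open scoped Kronecker

/-- The Euclidean norm of a finitely-indexed complex vector. -/
noncomputable def vecNorm {ι : Type*} [Fintype ι] (v : ι → ℂ) : ℝ :=
  Real.sqrt ((star v ⬝ᵥ v).re)

section Aux
variable {ι : Type*} [Fintype ι] [DecidableEq ι]

lemma kron_conjTranspose {m n : Type*} (A : Matrix m m ℂ) (B : Matrix n n ℂ) :
    (A ⊗ₖ B)ᴴ = Aᴴ ⊗ₖ Bᴴ := by
  ext i j
  simp [Matrix.conjTranspose_apply, Matrix.kroneckerMap_apply, mul_comm]

lemma sub_kron {m n : Type*} (A B : Matrix m m ℂ) (C : Matrix n n ℂ) :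
    (A - B) ⊗ₖ C = A ⊗ₖ C - B ⊗ₖ C := by
  ext i j
  simp [Matrix.kroneckerMap_apply, Matrix.sub_apply, sub_mul]

lemma isometry_dot (M : Matrix ι ι ℂ) (h : Mᴴ * M = 1) (v w : ι → ℂ) :
    star (M *ᵥ v) ⬝ᵥ (M *ᵥ w) = star v ⬝ᵥ w := by
  rw [Matrix.star_mulVec, Matrix.dotProduct_mulVec, Matrix.vecMul_vecMul, h, Matrix.vecMul_one]

noncomputable def toE (v : ι → ℂ) : EuclideanSpace ℂ ι := (WithLp.equiv 2 (ι → ℂ)).symm v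

lemma vecNorm_eq (v : ι → ℂ) : vecNorm v = ‖toE v‖ := by
  rw [vecNorm, EuclideanSpace.norm_eq]
  congr 1
  rw [dotProduct, Complex.re_sum]
  refine Finset.sum_congr rfl fun i _ => ?_
  simp [toE, Pi.star_apply, Complex.mul_conj, Complex.normSq_eq_norm_sq, sq]
  rw [← Complex.normSq_apply, Complex.normSq_eq_norm_sq, sq]

lemma vecNorm_triangle3 (u v w : ι → ℂ) :
    vecNorm (u + v + w) ≤ vecNorm u + vecNorm v + vecNorm w := by
  simp only [vecNorm_eq]
  have : toE (u + v + w) = toE u + toE v + toE w := rfl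
  rw [this]
  calc ‖toE u + toE v + toE w‖ ≤ ‖toE u + toE v‖ + ‖toE w‖ := norm_add_le _ _
    _ ≤ ‖toE u‖ + ‖toE v‖ + ‖toE w‖ := by
        have := norm_add_le (toE u) (toE v); linarith

lemma vecNorm_mulVec (M : Matrix ι ι ℂ) (h : Mᴴ * M = 1) (v : ι → ℂ) :
    vecNorm (M *ᵥ v) = vecNorm v := by
  rw [vecNorm, isometry_dot M h]; rfl

lemma approx_bound (M : Matrix ι ι ℂ) (h : Mᴴ * M = 1) (ψ : ι → ℂ)
    (hψ : star ψ ⬝ᵥ ψ = 1) (ε : ℝ) (hcorr : (star ψ ⬝ᵥ (M *ᵥ ψ)).re ≥ 1 - ε) :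
    vecNorm (M *ᵥ ψ - ψ) ≤ Real.sqrt (2 * ε) := by
  rw [vecNorm]
  apply Real.sqrt_le_sqrt
  have e1 : star (M *ᵥ ψ - ψ) ⬝ᵥ (M *ᵥ ψ - ψ)
      = star (M *ᵥ ψ) ⬝ᵥ (M *ᵥ ψ) - star (M *ᵥ ψ) ⬝ᵥ ψ - star ψ ⬝ᵥ (M *ᵥ ψ)
        + star ψ ⬝ᵥ ψ := by
    simp only [star_sub, sub_dotProduct, dotProduct_sub]
    ring
  have e2 : star (M *ᵥ ψ) ⬝ᵥ (M *ᵥ ψ) = 1 := by rw [isometry_dot M h, hψ]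
  have e3 : (star (M *ᵥ ψ) ⬝ᵥ ψ).re = (star ψ ⬝ᵥ (M *ᵥ ψ)).re := by
    rw [Matrix.star_dotProduct]
    simp
  have : (star (M *ᵥ ψ - ψ) ⬝ᵥ (M *ᵥ ψ - ψ)).re
      = 2 - 2 * (star ψ ⬝ᵥ (M *ᵥ ψ)).re := by
    rw [e1]
    simp [e2, e3, hψ]
    ring
  rw [this]; linarith

end Aux

/-- If `A₁, A₂, A₃` are binary observables on `H_A`, `B₁, B₂` commuting binary observables on
`H_B`, and the correlations `⟨ψ|A₁⊗B₁|ψ⟩ ≥ 1−ε₁`, `⟨ψ|A₂⊗B₂|ψ⟩ ≥ 1−ε₂`,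
`⟨ψ|A₃⊗B₂B₁|ψ⟩ ≥ 1−ε₃` hold, then `‖((A₁A₂ − A₃) ⊗ 1)ψ‖ ≤ √(2ε₁) + √(2ε₂) + √(2ε₃)`. -/
theorem approximate_linearity
    {mA mB : Type} [Fintype mA] [DecidableEq mA] [Fintype mB] [DecidableEq mB]
    (ψ : mA × mB → ℂ) (hψ : star ψ ⬝ᵥ ψ = 1)
    (A₁ A₂ A₃ : Matrix mA mA ℂ)
    (hA : ∀ A ∈ ({A₁, A₂, A₃} : Set (Matrix mA mA ℂ)), Aᴴ = A ∧ A * A = 1)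
    (B₁ B₂ : Matrix mB mB ℂ)
    (hB : ∀ B ∈ ({B₁, B₂} : Set (Matrix mB mB ℂ)), Bᴴ = B ∧ B * B = 1)
    (hBcomm : B₁ * B₂ = B₂ * B₁)
    (ε₁ ε₂ ε₃ : ℝ) (hε₁ : 0 ≤ ε₁) (hε₂ : 0 ≤ ε₂) (hε₃ : 0 ≤ ε₃)
    (h₁ : (star ψ ⬝ᵥ ((A₁ ⊗ₖ B₁) *ᵥ ψ)).re ≥ 1 - ε₁)
    (h₂ : (star ψ ⬝ᵥ ((A₂ ⊗ₖ B₂) *ᵥ ψ)).re ≥ 1 - ε₂)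
    (h₃ : (star ψ ⬝ᵥ ((A₃ ⊗ₖ (B₂ * B₁)) *ᵥ ψ)).re ≥ 1 - ε₃) :
    vecNorm (((A₁ * A₂ - A₃) ⊗ₖ (1 : Matrix mB mB ℂ)) *ᵥ ψ) ≤
      Real.sqrt (2 * ε₁) + Real.sqrt (2 * ε₂) + Real.sqrt (2 * ε₃) := by
  obtain ⟨hA₁h, hA₁u⟩ := hA A₁ (by simp)
  obtain ⟨hA₂h, hA₂u⟩ := hA A₂ (by simp)
  obtain ⟨hA₃h, hA₃u⟩ := hA A₃ (by simp)
  obtain ⟨hB₁h, hB₁u⟩ := hB B₁ (by simp)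
  obtain ⟨hB₂h, hB₂u⟩ := hB B₂ (by simp)
  -- unitarity of the Kronecker factors
  have u12 : (A₁ ⊗ₖ B₂)ᴴ * (A₁ ⊗ₖ B₂) = 1 := by
    rw [kron_conjTranspose, hA₁h, hB₂h, ← Matrix.mul_kronecker_mul, hA₁u, hB₂u,
      Matrix.one_kronecker_one]
  have u21 : ((1 : Matrix mA mA ℂ) ⊗ₖ (B₂ * B₁))ᴴ * ((1 : Matrix mA mA ℂ) ⊗ₖ (B₂ * B₁)) = 1 := by
    rw [kron_conjTranspose, Matrix.conjTranspose_mul, hB₁h, hB₂h, Matrix.conjTranspose_one,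
      ← Matrix.mul_kronecker_mul, Matrix.one_mul]
    have : B₁ * B₂ * (B₂ * B₁) = 1 := by
      rw [mul_assoc, ← mul_assoc B₂, hB₂u, Matrix.one_mul, hB₁u]
    rw [this, Matrix.one_kronecker_one]
  have u3 : (A₃ ⊗ₖ (1 : Matrix mB mB ℂ))ᴴ * (A₃ ⊗ₖ (1 : Matrix mB mB ℂ)) = 1 := by
    rw [kron_conjTranspose, hA₃h, Matrix.conjTranspose_one, ← Matrix.mul_kronecker_mul, hA₃u,
      Matrix.one_mul, Matrix.one_kronecker_one]
  -- unitarity of the correlation operators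
  have o1 : (A₁ ⊗ₖ B₁)ᴴ * (A₁ ⊗ₖ B₁) = 1 := by
    rw [kron_conjTranspose, hA₁h, hB₁h, ← Matrix.mul_kronecker_mul, hA₁u, hB₁u,
      Matrix.one_kronecker_one]
  have o2 : (A₂ ⊗ₖ B₂)ᴴ * (A₂ ⊗ₖ B₂) = 1 := by
    rw [kron_conjTranspose, hA₂h, hB₂h, ← Matrix.mul_kronecker_mul, hA₂u, hB₂u,
      Matrix.one_kronecker_one]
  have o3 : (A₃ ⊗ₖ (B₂ * B₁))ᴴ * (A₃ ⊗ₖ (B₂ * B₁)) = 1 := by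
    rw [kron_conjTranspose, hA₃h, Matrix.conjTranspose_mul, hB₁h, hB₂h,
      ← Matrix.mul_kronecker_mul, hA₃u]
    have : B₁ * B₂ * (B₂ * B₁) = 1 := by
      rw [mul_assoc, ← mul_assoc B₂, hB₂u, Matrix.one_mul, hB₁u]
    rw [this, Matrix.one_kronecker_one]
  -- the matrix identity
  have key : (A₁ * A₂ - A₃) ⊗ₖ (1 : Matrix mB mB ℂ)
      = (A₁ ⊗ₖ B₂) * (A₂ ⊗ₖ B₂ - 1)
        + ((1 : Matrix mA mA ℂ) ⊗ₖ (B₂ * B₁)) * (A₁ ⊗ₖ B₁ - 1)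
        + (A₃ ⊗ₖ (1 : Matrix mB mB ℂ)) * (A₃ ⊗ₖ (B₂ * B₁) - 1) := by
    rw [sub_kron]
    simp only [Matrix.mul_sub, Matrix.mul_one, ← Matrix.mul_kronecker_mul, hB₂u, hA₃u,
      Matrix.one_mul]
    rw [show B₂ * B₁ * B₁ = B₂ by rw [mul_assoc, hB₁u, Matrix.mul_one]]
    abel
  -- decompose the vector
  have decomp : ((A₁ * A₂ - A₃) ⊗ₖ (1 : Matrix mB mB ℂ)) *ᵥ ψ
      = (A₁ ⊗ₖ B₂) *ᵥ ((A₂ ⊗ₖ B₂) *ᵥ ψ - ψ)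
        + ((1 : Matrix mA mA ℂ) ⊗ₖ (B₂ * B₁)) *ᵥ ((A₁ ⊗ₖ B₁) *ᵥ ψ - ψ)
        + (A₃ ⊗ₖ (1 : Matrix mB mB ℂ)) *ᵥ ((A₃ ⊗ₖ (B₂ * B₁)) *ᵥ ψ - ψ) := by
    rw [key, Matrix.add_mulVec, Matrix.add_mulVec]
    simp only [← Matrix.mulVec_mulVec, Matrix.sub_mulVec, Matrix.one_mulVec,
      Matrix.mulVec_sub]
  rw [decomp]
  calc vecNorm _ ≤ vecNorm ((A₁ ⊗ₖ B₂) *ᵥ ((A₂ ⊗ₖ B₂) *ᵥ ψ - ψ))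
        + vecNorm (((1 : Matrix mA mA ℂ) ⊗ₖ (B₂ * B₁)) *ᵥ ((A₁ ⊗ₖ B₁) *ᵥ ψ - ψ))
        + vecNorm ((A₃ ⊗ₖ (1 : Matrix mB mB ℂ)) *ᵥ ((A₃ ⊗ₖ (B₂ * B₁)) *ᵥ ψ - ψ)) :=
      vecNorm_triangle3 _ _ _
    _ = vecNorm ((A₂ ⊗ₖ B₂) *ᵥ ψ - ψ) + vecNorm ((A₁ ⊗ₖ B₁) *ᵥ ψ - ψ)
        + vecNorm ((A₃ ⊗ₖ (B₂ * B₁)) *ᵥ ψ - ψ) := by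
      rw [vecNorm_mulVec _ u12, vecNorm_mulVec _ u21, vecNorm_mulVec _ u3]
    _ ≤ Real.sqrt (2 * ε₂) + Real.sqrt (2 * ε₁) + Real.sqrt (2 * ε₃) := by
      gcongr <;> [exact approx_bound _ o2 ψ hψ ε₂ h₂; exact approx_bound _ o1 ψ hψ ε₁ h₁;
        exact approx_bound _ o3 ψ hψ ε₃ h₃]
    _ = _ := by ring
end

section
/- Let H_A and H_B be finite-dimensional complex Hilbert spaces and ψ ∈ H_A ⊗ H_B a unit vector. Let A_1, A_2 be self-adjoint unitaries on H_A and B_1, B_2 self-adjoint unitaries on H_B. Suppose ‖(A_1 ⊗ 1_{H_B} − 1_{H_A} ⊗ B_1) ψ‖ ≤ ε_1, ‖(A_2 ⊗ 1_{H_B} − 1_{H_A} ⊗ B_2) ψ‖ ≤ ε_2, and ‖((A_1 A_2 + A_2 A_1) ⊗ 1_{H_B}) ψ‖ ≤ η for nonnegative reals ε_1, ε_2, η. Then ‖(1_{H_A} ⊗ (B_1 B_2 + B_2 B_1)) ψ‖ ≤ η + 2ε_1 + 2ε_2. -/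
open Matrix
open scoped Kronecker

lemma vecNorm_eq_norm {ι : Type*} [Fintype ι] (v : ι → ℂ) :
    vecNorm v = ‖(WithLp.equiv 2 (ι → ℂ)).symm v‖ := by
  rw [EuclideanSpace.norm_eq, vecNorm]
  congr 1
  simp only [dotProduct, Pi.star_apply, Complex.re_sum]
  refine Finset.sum_congr rfl fun i _ => ?_
  have : (star (v i) * v i) = (‖v i‖ : ℂ)^2 := by
    rw [mul_comm, ← Complex.mul_conj']; rfl
  rw [this, show ((‖v i‖:ℂ)^2).re = ‖v i‖^2 by rw [← Complex.ofReal_pow, Complex.ofReal_re]]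
  rfl

lemma vecNorm_add_le {ι : Type*} [Fintype ι] (u v : ι → ℂ) :
    vecNorm (u + v) ≤ vecNorm u + vecNorm v := by
  simp only [vecNorm_eq_norm]
  rw [show (WithLp.equiv 2 (ι → ℂ)).symm (u + v)
      = (WithLp.equiv 2 (ι → ℂ)).symm u + (WithLp.equiv 2 (ι → ℂ)).symm v from rfl]
  exact norm_add_le _ _

lemma vecNorm_neg {ι : Type*} [Fintype ι] (v : ι → ℂ) : vecNorm (-v) = vecNorm v := by
  simp only [vecNorm_eq_norm]
  rw [show (WithLp.equiv 2 (ι → ℂ)).symm (-v) = -(WithLp.equiv 2 (ι → ℂ)).symm v from rfl]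
  exact norm_neg _

lemma vecNorm_unitary {ι : Type*} [Fintype ι] [DecidableEq ι] (M : Matrix ι ι ℂ)
    (hM : Mᴴ * M = 1) (v : ι → ℂ) : vecNorm (M *ᵥ v) = vecNorm v := by
  unfold vecNorm
  congr 2
  rw [star_mulVec, dotProduct_mulVec, vecMul_vecMul, hM, vecMul_one]

lemma conjTranspose_kron {mA mB : Type} [Fintype mA] [Fintype mB]
    (A : Matrix mA mA ℂ) (B : Matrix mB mB ℂ) : (A ⊗ₖ B)ᴴ = Aᴴ ⊗ₖ Bᴴ := by
  ext ⟨i, j⟩ ⟨k, l⟩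
  simp [Matrix.conjTranspose_apply, Matrix.kroneckerMap_apply, star_mul', mul_comm]

/-- If binary observables `A₁, A₂` on `H_A` are approximately consistent with binary
observables `B₁, B₂` on `H_B` on the state `ψ`, and `A₁, A₂` approximately anticommute on
`ψ`, then `B₁, B₂` approximately anticommute on `ψ`:
`‖(1 ⊗ (B₁B₂ + B₂B₁))ψ‖ ≤ η + 2ε₁ + 2ε₂`. -/
theorem anticommutation_transfer
    {mA mB : Type} [Fintype mA] [DecidableEq mA] [Fintype mB] [DecidableEq mB]
    (ψ : mA × mB → ℂ) (hψ : star ψ ⬝ᵥ ψ = 1)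
    (A₁ A₂ : Matrix mA mA ℂ)
    (hA : ∀ A ∈ ({A₁, A₂} : Set (Matrix mA mA ℂ)), Aᴴ = A ∧ A * A = 1)
    (B₁ B₂ : Matrix mB mB ℂ)
    (hB : ∀ B ∈ ({B₁, B₂} : Set (Matrix mB mB ℂ)), Bᴴ = B ∧ B * B = 1)
    (ε₁ ε₂ η : ℝ) (hε₁ : 0 ≤ ε₁) (hε₂ : 0 ≤ ε₂) (hη : 0 ≤ η)
    (h₁ : vecNorm ((A₁ ⊗ₖ (1 : Matrix mB mB ℂ) - (1 : Matrix mA mA ℂ) ⊗ₖ B₁) *ᵥ ψ) ≤ ε₁)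
    (h₂ : vecNorm ((A₂ ⊗ₖ (1 : Matrix mB mB ℂ) - (1 : Matrix mA mA ℂ) ⊗ₖ B₂) *ᵥ ψ) ≤ ε₂)
    (h₃ : vecNorm (((A₁ * A₂ + A₂ * A₁) ⊗ₖ (1 : Matrix mB mB ℂ)) *ᵥ ψ) ≤ η) :
    vecNorm (((1 : Matrix mA mA ℂ) ⊗ₖ (B₁ * B₂ + B₂ * B₁)) *ᵥ ψ) ≤ η + 2 * ε₁ + 2 * ε₂ := by
  obtain ⟨hA₁s, hA₁u⟩ := hA A₁ (Set.mem_insert _ _)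
  obtain ⟨hA₂s, hA₂u⟩ := hA A₂ (Set.mem_insert_of_mem _ rfl)
  obtain ⟨hB₁s, hB₁u⟩ := hB B₁ (Set.mem_insert _ _)
  obtain ⟨hB₂s, hB₂u⟩ := hB B₂ (Set.mem_insert_of_mem _ rfl)
  set D₁ : Matrix (mA × mB) (mA × mB) ℂ := A₁ ⊗ₖ (1 : Matrix mB mB ℂ) - (1 : Matrix mA mA ℂ) ⊗ₖ B₁ with hD₁
  set D₂ : Matrix (mA × mB) (mA × mB) ℂ := A₂ ⊗ₖ (1 : Matrix mB mB ℂ) - (1 : Matrix mA mA ℂ) ⊗ₖ B₂ with hD₂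
  -- unitarity of the four relevant Kronecker factors
  have uk : ∀ (A : Matrix mA mA ℂ) (B : Matrix mB mB ℂ), Aᴴ = A → A * A = 1 → Bᴴ = B →
      B * B = 1 → (A ⊗ₖ B)ᴴ * (A ⊗ₖ B) = 1 := by
    intro A B hAs hAu hBs hBu
    rw [conjTranspose_kron, hAs, hBs, ← Matrix.mul_kronecker_mul, hAu, hBu,
      Matrix.one_kronecker_one]
  have u1 : ((A₁ ⊗ₖ (1 : Matrix mB mB ℂ))ᴴ * (A₁ ⊗ₖ (1 : Matrix mB mB ℂ))) = 1 :=
    uk _ _ hA₁s hA₁u Matrix.conjTranspose_one (Matrix.one_mul 1)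
  have u2 : ((A₂ ⊗ₖ (1 : Matrix mB mB ℂ))ᴴ * (A₂ ⊗ₖ (1 : Matrix mB mB ℂ))) = 1 :=
    uk _ _ hA₂s hA₂u Matrix.conjTranspose_one (Matrix.one_mul 1)
  have u3 : (((1 : Matrix mA mA ℂ) ⊗ₖ B₁)ᴴ * ((1 : Matrix mA mA ℂ) ⊗ₖ B₁)) = 1 :=
    uk _ _ Matrix.conjTranspose_one (Matrix.one_mul 1) hB₁s hB₁u
  have u4 : (((1 : Matrix mA mA ℂ) ⊗ₖ B₂)ᴴ * ((1 : Matrix mA mA ℂ) ⊗ₖ B₂)) = 1 :=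
    uk _ _ Matrix.conjTranspose_one (Matrix.one_mul 1) hB₂s hB₂u
  -- the key matrix identity
  have key : (1 : Matrix mA mA ℂ) ⊗ₖ (B₁ * B₂ + B₂ * B₁)
      = ((A₁ * A₂ + A₂ * A₁) ⊗ₖ (1 : Matrix mB mB ℂ))
        + (-((A₂ ⊗ₖ (1 : Matrix mB mB ℂ)) * D₁))
        + (-(((1 : Matrix mA mA ℂ) ⊗ₖ B₁) * D₂))
        + (-((A₁ ⊗ₖ (1 : Matrix mB mB ℂ)) * D₂))
        + (-(((1 : Matrix mA mA ℂ) ⊗ₖ B₂) * D₁)) := by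
    simp only [hD₁, hD₂, Matrix.mul_sub, ← Matrix.mul_kronecker_mul, Matrix.mul_one,
      Matrix.one_mul, Matrix.add_kronecker, Matrix.kronecker_add]
    abel
  -- apply to ψ
  have keyv : ((1 : Matrix mA mA ℂ) ⊗ₖ (B₁ * B₂ + B₂ * B₁)) *ᵥ ψ
      = (((A₁ * A₂ + A₂ * A₁) ⊗ₖ (1 : Matrix mB mB ℂ)) *ᵥ ψ)
        + (-((A₂ ⊗ₖ (1 : Matrix mB mB ℂ)) *ᵥ (D₁ *ᵥ ψ)))
        + (-(((1 : Matrix mA mA ℂ) ⊗ₖ B₁) *ᵥ (D₂ *ᵥ ψ)))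
        + (-((A₁ ⊗ₖ (1 : Matrix mB mB ℂ)) *ᵥ (D₂ *ᵥ ψ)))
        + (-(((1 : Matrix mA mA ℂ) ⊗ₖ B₂) *ᵥ (D₁ *ᵥ ψ))) := by
    rw [key]
    simp only [Matrix.add_mulVec, Matrix.neg_mulVec, Matrix.mulVec_mulVec]
  have tri : ∀ a b c d e : (mA × mB → ℂ), vecNorm (a + b + c + d + e)
      ≤ vecNorm a + vecNorm b + vecNorm c + vecNorm d + vecNorm e := by
    intro a b c d e
    have h1 := vecNorm_add_le (a + b + c + d) e
    have h2 := vecNorm_add_le (a + b + c) d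
    have h3 := vecNorm_add_le (a + b) c
    have h4 := vecNorm_add_le a b
    linarith
  rw [keyv]
  have b1 : vecNorm ((A₂ ⊗ₖ (1 : Matrix mB mB ℂ)) *ᵥ (D₁ *ᵥ ψ)) ≤ ε₁ := by
    rw [vecNorm_unitary _ u2]; exact h₁
  have b2 : vecNorm (((1 : Matrix mA mA ℂ) ⊗ₖ B₁) *ᵥ (D₂ *ᵥ ψ)) ≤ ε₂ := by
    rw [vecNorm_unitary _ u3]; exact h₂
  have b3 : vecNorm ((A₁ ⊗ₖ (1 : Matrix mB mB ℂ)) *ᵥ (D₂ *ᵥ ψ)) ≤ ε₂ := by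
    rw [vecNorm_unitary _ u1]; exact h₂
  have b4 : vecNorm (((1 : Matrix mA mA ℂ) ⊗ₖ B₂) *ᵥ (D₁ *ᵥ ψ)) ≤ ε₁ := by
    rw [vecNorm_unitary _ u4]; exact h₁
  have := tri (((A₁ * A₂ + A₂ * A₁) ⊗ₖ (1 : Matrix mB mB ℂ)) *ᵥ ψ)
    (-((A₂ ⊗ₖ (1 : Matrix mB mB ℂ)) *ᵥ (D₁ *ᵥ ψ)))
    (-(((1 : Matrix mA mA ℂ) ⊗ₖ B₁) *ᵥ (D₂ *ᵥ ψ)))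
    (-((A₁ ⊗ₖ (1 : Matrix mB mB ℂ)) *ᵥ (D₂ *ᵥ ψ)))
    (-(((1 : Matrix mA mA ℂ) ⊗ₖ B₂) *ᵥ (D₁ *ᵥ ψ)))
  simp only [vecNorm_neg] at this
  linarith
end
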